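/- arXiv:2112.13909 — 9 statements merged into one kernel-verified Lean document; each statement's English description precedes it below -/
import Mathlib

section
/- An element d ∈ U_k is idempotent if and only if d = e_π for some set partition π of [k], where e_π = {A ∪ Ā : A ∈ π}. In particular, every idempotent of U_k has top(d) = bot(d) and induces the identity bijection on blocks. -/
open Sum

/-- A set partition `d` of `[k] ∪ [k̄]` (encoded as a setoid on `Fin k ⊕ Fin k`,
top row = `inl`, bottom row = `inr`) is *uniform* if every block contains as many
top-row elements as bottom-row elements. -/
def IsUniform (k : ℕ) (d : Setoid (Fin k ⊕ Fin k)) : Prop :=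
  ∀ x : Fin k ⊕ Fin k,
    {a : Fin k | d.r (.inl a) x}.ncard = {b : Fin k | d.r (.inr b) x}.ncard

/-- Embedding of a two-row diagram into the top two rows of a three-row diagram. -/
def row12 (k : ℕ) : Fin k ⊕ Fin k → Fin k ⊕ (Fin k ⊕ Fin k) :=
  Sum.elim (fun a => .inl a) (fun b => .inr (.inl b))

/-- Embedding of a two-row diagram into the bottom two rows of a three-row diagram. -/
def row23 (k : ℕ) : Fin k ⊕ Fin k → Fin k ⊕ (Fin k ⊕ Fin k) :=
  Sum.elim (fun a => .inr (.inl a)) (fun b => .inr (.inr b))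

/-- Embedding of a two-row diagram into the outer two rows of a three-row diagram. -/
def row13 (k : ℕ) : Fin k ⊕ Fin k → Fin k ⊕ (Fin k ⊕ Fin k) :=
  Sum.elim (fun a => .inl a) (fun b => .inr (.inr b))

/-- The equivalence relation on the three-row vertex set generated by transporting
`d` along the embedding `f`. -/
def liftSetoid (k : ℕ) (f : Fin k ⊕ Fin k → Fin k ⊕ (Fin k ⊕ Fin k))
    (d : Setoid (Fin k ⊕ Fin k)) : Setoid (Fin k ⊕ (Fin k ⊕ Fin k)) :=
  Relation.EqvGen.setoid (fun x y => ∃ a b, d.r a b ∧ x = f a ∧ y = f b)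

/-- The diagram product: stack `d` on top of `d'`, take connected components of the
three-row diagram, and restrict to the outer rows. -/
def ubpMul {k : ℕ} (d d' : Setoid (Fin k ⊕ Fin k)) : Setoid (Fin k ⊕ Fin k) :=
  Setoid.comap (row13 k) (liftSetoid k (row12 k) d ⊔ liftSetoid k (row23 k) d')

/-- The identity diagram `{{1,1̄},…,{k,k̄}}`. -/
def ubpOne (k : ℕ) : Setoid (Fin k ⊕ Fin k) := Setoid.ker (Sum.elim id id)

/-- The set partition of `[k]` induced on the top row. -/
def topPart {k : ℕ} (d : Setoid (Fin k ⊕ Fin k)) : Setoid (Fin k) :=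
  Setoid.comap Sum.inl d

/-- The set partition of `[k]` induced on the bottom row. -/
def botPart {k : ℕ} (d : Setoid (Fin k ⊕ Fin k)) : Setoid (Fin k) :=
  Setoid.comap Sum.inr d

/-- The idempotent diagram `e_π = {A ∪ Ā : A ∈ π}` associated to a set partition `π` of `[k]`. -/
def ePart {k : ℕ} (π : Setoid (Fin k)) : Setoid (Fin k ⊕ Fin k) :=
  Setoid.comap (Sum.elim id id) π

/-- The diagram `{{i, σ(i)‾} : i ∈ [k]}` of a permutation `σ ∈ S_k`. -/
def permToUBP {k : ℕ} (σ : Equiv.Perm (Fin k)) : Setoid (Fin k ⊕ Fin k) :=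
  Setoid.ker (Sum.elim (fun i => σ i) id)

/-- The reflection `d̃` of a diagram across a horizontal line (swap barred/unbarred). -/
def reflectUBP {k : ℕ} (d : Setoid (Fin k ⊕ Fin k)) : Setoid (Fin k ⊕ Fin k) :=
  Setoid.comap Sum.swap d

/-- The image of a set `C ⊆ [k]` of top-row elements under the block bijection of `d`:
the set of bottom-row elements connected to some element of `C`. -/
def blockMap {k : ℕ} (d : Setoid (Fin k ⊕ Fin k)) (C : Set (Fin k)) : Set (Fin k) :=
  {j | ∃ i ∈ C, d.r (.inl i) (.inr j)}

section Aux

open Relation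

variable {k : ℕ}

private lemma lift_rel (f : Fin k ⊕ Fin k → Fin k ⊕ (Fin k ⊕ Fin k))
    (d : Setoid (Fin k ⊕ Fin k)) {a b : Fin k ⊕ Fin k} (h : d a b) :
    (liftSetoid k f d) (f a) (f b) :=
  EqvGen.rel _ _ ⟨a, b, h, rfl, rfl⟩

private lemma J12 {d d' : Setoid (Fin k ⊕ Fin k)} {a b : Fin k ⊕ Fin k} (h : d a b) :
    (liftSetoid k (row12 k) d ⊔ liftSetoid k (row23 k) d') (row12 k a) (row12 k b) :=
  Setoid.le_def.mp le_sup_left (lift_rel _ _ h)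

private lemma J23 {d d' : Setoid (Fin k ⊕ Fin k)} {a b : Fin k ⊕ Fin k} (h : d' a b) :
    (liftSetoid k (row12 k) d ⊔ liftSetoid k (row23 k) d') (row23 k a) (row23 k b) :=
  Setoid.le_def.mp le_sup_right (lift_rel _ _ h)

/-- The chain `inl a ∼₁₂ mid c ∼₂₃ mid x ∼₂₃ inr y` shows `d²` relates `inl a` and `inr y`;
by idempotency so does `d`. -/
private lemma chain_alpha {d : Setoid (Fin k ⊕ Fin k)} (h : ubpMul d d = d) {a c x y : Fin k}
    (h1 : d (.inl a) (.inr c)) (h2 : d (.inl c) (.inl x)) (h3 : d (.inl x) (.inr y)) :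
    d (Sum.inl a) (Sum.inr y) := by
  have key : ubpMul d d (Sum.inl a) (Sum.inr y) := by
    show (liftSetoid k (row12 k) d ⊔ liftSetoid k (row23 k) d)
      (row13 k (Sum.inl a)) (row13 k (Sum.inr y))
    have j1 := J12 (d' := d) h1
    have j2 := J23 (d := d) h2
    have j3 := J23 (d := d) h3
    exact Setoid.trans' _ j1 (Setoid.trans' _ j2 j3)
  rwa [h] at key

private lemma exists_bot {d : Setoid (Fin k ⊕ Fin k)} (hd : IsUniform k d) (v : Fin k) :
    ∃ w, d (Sum.inl v) (Sum.inr w) := by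
  have h := hd (Sum.inl v)
  have hne : {a : Fin k | d.r (.inl a) (Sum.inl v)}.Nonempty := ⟨v, Setoid.refl _⟩
  have hpos : 0 < {b : Fin k | d.r (.inr b) (Sum.inl v)}.ncard := by
    rw [← h]
    exact (Set.ncard_pos (Set.toFinite _)).mpr hne
  obtain ⟨w, hw⟩ := (Set.ncard_pos (Set.toFinite _)).mp hpos
  exact ⟨w, Setoid.symm' _ hw⟩

private lemma exists_top {d : Setoid (Fin k ⊕ Fin k)} (hd : IsUniform k d) (v : Fin k) :
    ∃ w, d (Sum.inl w) (Sum.inr v) := by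
  have h := hd (Sum.inr v)
  have hne : {b : Fin k | d.r (.inr b) (Sum.inr v)}.Nonempty := ⟨v, Setoid.refl _⟩
  have hpos : 0 < {a : Fin k | d.r (.inl a) (Sum.inr v)}.ncard := by
    rw [h]
    exact (Set.ncard_pos (Set.toFinite _)).mpr hne
  obtain ⟨w, hw⟩ := (Set.ncard_pos (Set.toFinite _)).mp hpos
  exact ⟨w, hw⟩

/-- Every idempotent uniform diagram contains all vertical edges `{a, ā}`. -/
private lemma diag {d : Setoid (Fin k ⊕ Fin k)} (hd : IsUniform k d)
    (h : ubpMul d d = d) (a : Fin k) : d (Sum.inl a) (Sum.inr a) := by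
  obtain ⟨e, he⟩ := exists_top hd a
  obtain ⟨y, hy⟩ := exists_bot hd a
  have h1 : d (Sum.inl e) (Sum.inr y) := chain_alpha h he (Setoid.refl _) hy
  exact Setoid.trans' _ hy (Setoid.trans' _ (Setoid.symm' _ h1) he)

private def padd : Fin k ⊕ (Fin k ⊕ Fin k) → Fin k := Sum.elim id (Sum.elim id id)

private lemma ePart_idem (π : Setoid (Fin k)) : ubpMul (ePart π) (ePart π) = ePart π := by
  have key : liftSetoid k (row12 k) (ePart π) ⊔ liftSetoid k (row23 k) (ePart π)
      = Setoid.comap padd π := by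
    apply le_antisymm
    · apply sup_le
      · apply Setoid.eqvGen_le
        rintro x y ⟨a, b, hab, rfl, rfl⟩
        show π (padd (row12 k a)) (padd (row12 k b))
        cases a <;> cases b <;> exact hab
      · apply Setoid.eqvGen_le
        rintro x y ⟨a, b, hab, rfl, rfl⟩
        show π (padd (row23 k a)) (padd (row23 k b))
        cases a <;> cases b <;> exact hab
    · rw [Setoid.le_def]
      intro x y hxy
      have hp : π (padd x) (padd y) := hxy
      obtain (a | m | b) := x <;> obtain (a' | m' | b') := y
      · exact J12 (d := ePart π) (d' := ePart π) (a := Sum.inl a) (b := Sum.inl a') hp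
      · exact J12 (d := ePart π) (d' := ePart π) (a := Sum.inl a) (b := Sum.inr m') hp
      · exact Setoid.trans' _
          (J12 (d := ePart π) (d' := ePart π) (a := Sum.inl a) (b := Sum.inr a)
            (Setoid.refl' π a))
          (J23 (d := ePart π) (d' := ePart π) (a := Sum.inl a) (b := Sum.inr b') hp)
      · exact J12 (d := ePart π) (d' := ePart π) (a := Sum.inr m) (b := Sum.inl a') hp
      · exact J12 (d := ePart π) (d' := ePart π) (a := Sum.inr m) (b := Sum.inr m') hp
      · exact J23 (d := ePart π) (d' := ePart π) (a := Sum.inl m) (b := Sum.inr b') hp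
      · refine Setoid.symm' _ (Setoid.trans' _
          (J12 (d := ePart π) (d' := ePart π) (a := Sum.inl a') (b := Sum.inr a')
            (Setoid.refl' π a')) ?_)
        exact J23 (d := ePart π) (d' := ePart π) (a := Sum.inl a') (b := Sum.inr b)
          (Setoid.symm' π hp)
      · exact J23 (d := ePart π) (d' := ePart π) (a := Sum.inr b) (b := Sum.inl m') hp
      · exact J23 (d := ePart π) (d' := ePart π) (a := Sum.inr b) (b := Sum.inr b') hp
  apply Setoid.ext
  intro x y
  show (liftSetoid k (row12 k) (ePart π) ⊔ liftSetoid k (row23 k) (ePart π))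
      (row13 k x) (row13 k y) ↔ ePart π x y
  rw [key]
  show π (padd (row13 k x)) (padd (row13 k y)) ↔ π (Sum.elim id id x) (Sum.elim id id y)
  cases x <;> cases y <;> exact Iff.rfl

end Aux

/-- An element `d ∈ U_k` is idempotent iff `d = e_π` for some set
partition `π` of `[k]`; in particular every idempotent satisfies `top(d) = bot(d)`
and induces the identity bijection on blocks. -/
theorem ubp_idempotent_iff (k : ℕ) (d : Setoid (Fin k ⊕ Fin k)) (hd : IsUniform k d) :
    (ubpMul d d = d ↔ ∃ π : Setoid (Fin k), d = ePart π) ∧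
    (ubpMul d d = d → topPart d = botPart d ∧
      ∀ C ∈ (topPart d).classes, blockMap d C = C) := by
  constructor
  · constructor
    · intro h
      refine ⟨topPart d, Setoid.ext fun x y => ?_⟩
      have hd' : ∀ a : Fin k, d (Sum.inl a) (Sum.inr a) := diag hd h
      show d x y ↔ (topPart d) (Sum.elim id id x) (Sum.elim id id y)
      cases x with
      | inl a =>
        cases y with
        | inl b => exact Iff.rfl
        | inr b =>
          exact ⟨fun h' => Setoid.trans' d h' (Setoid.symm' d (hd' b)),
                 fun h' => Setoid.trans' d (show d (Sum.inl a) (Sum.inl b) from h') (hd' b)⟩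
      | inr a =>
        cases y with
        | inl b =>
          exact ⟨fun h' => Setoid.trans' d (hd' a) h',
                 fun h' => Setoid.trans' d (Setoid.symm' d (hd' a))
                   (show d (Sum.inl a) (Sum.inl b) from h')⟩
        | inr b =>
          exact ⟨fun h' => Setoid.trans' d (hd' a) (Setoid.trans' d h' (Setoid.symm' d (hd' b))),
                 fun h' => Setoid.trans' d (Setoid.symm' d (hd' a))
                   (Setoid.trans' d (show d (Sum.inl a) (Sum.inl b) from h') (hd' b))⟩
    · rintro ⟨π, rfl⟩
      exact ePart_idem π
  · intro h
    have hd' : ∀ a : Fin k, d (Sum.inl a) (Sum.inr a) := diag hd h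
    constructor
    · refine Setoid.ext fun i j => ?_
      show d (Sum.inl i) (Sum.inl j) ↔ d (Sum.inr i) (Sum.inr j)
      exact ⟨fun h' => Setoid.trans' _ (Setoid.symm' _ (hd' i))
               (Setoid.trans' _ h' (hd' j)),
             fun h' => Setoid.trans' _ (hd' i) (Setoid.trans' _ h' (Setoid.symm' _ (hd' j)))⟩
    · rintro C ⟨i0, rfl⟩
      ext j
      constructor
      · rintro ⟨i, hi, hij⟩
        have hi' : d (Sum.inl i) (Sum.inl i0) := hi
        show d (Sum.inl j) (Sum.inl i0)
        exact Setoid.trans' _ (hd' j) (Setoid.trans' _ (Setoid.symm' _ hij) hi')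
      · intro hj
        have hj' : d (Sum.inl j) (Sum.inl i0) := hj
        exact ⟨j, hj', hd' j⟩
end

section
/- The map π ↦ e_π is a monoid isomorphism from the lattice of set partitions of [k] under the join operation to the set of idempotents of U_k under diagram multiplication; in particular, e_π · e_γ = e_{π ∨ γ} for all set partitions π, γ of [k]. -/
open Sum

section Aux
variable {k : ℕ}

/-- Projection of the three-row vertex set to `[k]`. -/
def e3 (k : ℕ) : Fin k ⊕ (Fin k ⊕ Fin k) → Fin k :=
  Sum.elim id (Sum.elim id id)

lemma lift12_le_comap (π γ : Setoid (Fin k)) :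
    liftSetoid k (row12 k) (ePart π) ≤ Setoid.comap (e3 k) (π ⊔ γ) := by
  apply Setoid.eqvGen_le
  rintro x y ⟨a, b, hab, rfl, rfl⟩
  have h : π (Sum.elim id id a) (Sum.elim id id b) := hab
  have h2 : (π ⊔ γ) (Sum.elim id id a) (Sum.elim id id b) := Setoid.le_def.mp le_sup_left h
  have : ∀ z : Fin k ⊕ Fin k, e3 k (row12 k z) = Sum.elim id id z := by rintro (z | z) <;> rfl
  show (π ⊔ γ) (e3 k (row12 k a)) (e3 k (row12 k b))
  rw [this, this]; exact h2

lemma lift23_le_comap (π γ : Setoid (Fin k)) :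
    liftSetoid k (row23 k) (ePart γ) ≤ Setoid.comap (e3 k) (π ⊔ γ) := by
  apply Setoid.eqvGen_le
  rintro x y ⟨a, b, hab, rfl, rfl⟩
  have h : γ (Sum.elim id id a) (Sum.elim id id b) := hab
  have h2 : (π ⊔ γ) (Sum.elim id id a) (Sum.elim id id b) := Setoid.le_def.mp le_sup_right h
  have : ∀ z : Fin k ⊕ Fin k, e3 k (row23 k z) = Sum.elim id id z := by rintro (z | z) <;> rfl
  show (π ⊔ γ) (e3 k (row23 k a)) (e3 k (row23 k b))
  rw [this, this]; exact h2

/-- Every vertex is connected to the middle-row copy of its projection. -/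
lemma toMid (π γ : Setoid (Fin k)) (x : Fin k ⊕ (Fin k ⊕ Fin k)) :
    (liftSetoid k (row12 k) (ePart π) ⊔ liftSetoid k (row23 k) (ePart γ))
      x (Sum.inr (Sum.inl (e3 k x))) := by
  rcases x with a | (m | b)
  · refine Setoid.le_def.mp le_sup_left ?_
    exact Relation.EqvGen.rel _ _ ⟨Sum.inl a, Sum.inr a, π.refl' a, rfl, rfl⟩
  · exact Setoid.refl' _ _
  · refine Setoid.le_def.mp le_sup_right ?_
    exact (liftSetoid k (row23 k) (ePart γ)).symm'
      (Relation.EqvGen.rel _ _ ⟨Sum.inl b, Sum.inr b, γ.refl' b, rfl, rfl⟩)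

lemma midTransport (π γ : Setoid (Fin k)) {m m' : Fin k} (h : (π ⊔ γ) m m') :
    (liftSetoid k (row12 k) (ePart π) ⊔ liftSetoid k (row23 k) (ePart γ))
      (Sum.inr (Sum.inl m)) (Sum.inr (Sum.inl m')) := by
  revert m m' h
  have : π ⊔ γ ≤ Setoid.comap (fun m : Fin k => (Sum.inr (Sum.inl m) : Fin k ⊕ (Fin k ⊕ Fin k)))
      (liftSetoid k (row12 k) (ePart π) ⊔ liftSetoid k (row23 k) (ePart γ)) := by
    apply sup_le
    · intro m m' h
      refine Setoid.le_def.mp le_sup_left ?_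
      exact Relation.EqvGen.rel _ _ ⟨Sum.inr m, Sum.inr m', h, rfl, rfl⟩
    · intro m m' h
      refine Setoid.le_def.mp le_sup_right ?_
      exact Relation.EqvGen.rel _ _ ⟨Sum.inl m, Sum.inl m', h, rfl, rfl⟩
  intro m m' h
  exact Setoid.le_def.mp this h

lemma sup_lift_eq (π γ : Setoid (Fin k)) :
    liftSetoid k (row12 k) (ePart π) ⊔ liftSetoid k (row23 k) (ePart γ) =
      Setoid.comap (e3 k) (π ⊔ γ) := by
  apply le_antisymm
  · exact sup_le (lift12_le_comap π γ) (lift23_le_comap π γ)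
  · intro x y h
    have h' : (π ⊔ γ) (e3 k x) (e3 k y) := h
    set S := liftSetoid k (row12 k) (ePart π) ⊔ liftSetoid k (row23 k) (ePart γ)
    exact S.trans' (toMid π γ x) (S.trans' (midTransport π γ h') (S.symm' (toMid π γ y)))

lemma ubpMul_ePart (π γ : Setoid (Fin k)) :
    ubpMul (ePart π) (ePart γ) = ePart (π ⊔ γ) := by
  unfold ubpMul
  rw [sup_lift_eq]
  apply Setoid.ext
  intro x y
  show (π ⊔ γ) (e3 k (row13 k x)) (e3 k (row13 k y)) ↔
    (π ⊔ γ) (Sum.elim id id x) (Sum.elim id id y)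
  have : ∀ z : Fin k ⊕ Fin k, e3 k (row13 k z) = Sum.elim id id z := by rintro (z | z) <;> rfl
  rw [this, this]

end Aux

section Idem
variable {k : ℕ} {d : Setoid (Fin k ⊕ Fin k)}

/-- From idempotency: the "down-up" composition rule. -/
lemma star3 (hI : ubpMul d d = d) {i i' m : Fin k}
    (h1 : d (.inl i) (.inr m)) (h2 : d (.inl i') (.inr m)) : d (.inl i) (.inl i') := by
  rw [← hI]
  show (liftSetoid k (row12 k) d ⊔ liftSetoid k (row23 k) d)
    (row13 k (.inl i)) (row13 k (.inl i'))
  set S := liftSetoid k (row12 k) d ⊔ liftSetoid k (row23 k) d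
  have e1 : S (Sum.inl i) (Sum.inr (Sum.inl m)) :=
    Setoid.le_def.mp le_sup_left (Relation.EqvGen.rel _ _ ⟨Sum.inl i, Sum.inr m, h1, rfl, rfl⟩)
  have e2 : S (Sum.inl i') (Sum.inr (Sum.inl m)) :=
    Setoid.le_def.mp le_sup_left (Relation.EqvGen.rel _ _ ⟨Sum.inl i', Sum.inr m, h2, rfl, rfl⟩)
  exact S.trans' e1 (S.symm' e2)

/-- From idempotency: the "down-down" composition rule. -/
lemma star (hI : ubpMul d d = d) {i m j : Fin k}
    (h1 : d (.inl i) (.inr m)) (h2 : d (.inl m) (.inr j)) : d (.inl i) (.inr j) := by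
  rw [← hI]
  show (liftSetoid k (row12 k) d ⊔ liftSetoid k (row23 k) d)
    (row13 k (.inl i)) (row13 k (.inr j))
  set S := liftSetoid k (row12 k) d ⊔ liftSetoid k (row23 k) d
  have e1 : S (Sum.inl i) (Sum.inr (Sum.inl m)) :=
    Setoid.le_def.mp le_sup_left (Relation.EqvGen.rel _ _ ⟨Sum.inl i, Sum.inr m, h1, rfl, rfl⟩)
  have e2 : S (Sum.inr (Sum.inl m)) (Sum.inr (Sum.inr j)) :=
    Setoid.le_def.mp le_sup_right (Relation.EqvGen.rel _ _ ⟨Sum.inl m, Sum.inr j, h2, rfl, rfl⟩)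
  exact S.trans' e1 e2

lemma exists_bot_s5 (hU : IsUniform k d) (i' : Fin k) : ∃ j, d (.inr j) (.inl i') := by
  have h := hU (.inl i')
  have hfin : {b : Fin k | d.r (.inr b) (.inl i')}.Finite := Set.toFinite _
  have hpos : 0 < {a : Fin k | d.r (.inl a) (.inl i')}.ncard :=
    (Set.ncard_pos (Set.toFinite _)).mpr ⟨i', d.refl' _⟩
  rw [h] at hpos
  obtain ⟨j, hj⟩ := Set.nonempty_of_ncard_ne_zero hpos.ne'
  exact ⟨j, hj⟩

lemma L1 (hU : IsUniform k d) (hI : ubpMul d d = d) {i m i' : Fin k}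
    (h1 : d (.inl i) (.inr m)) (h2 : d (.inl m) (.inl i')) : d (.inl i) (.inl i') := by
  obtain ⟨j', hj'⟩ := exists_bot_s5 hU i'
  have hR2 : d (.inl m) (.inr j') := d.trans' h2 (d.symm' hj')
  have hR3 : d (.inl i) (.inr j') := star hI h1 hR2
  have hR4 : d (.inl i') (.inr j') := d.symm' hj'
  exact star3 hI hR3 hR4

lemma R_refl (hU : IsUniform k d) (hI : ubpMul d d = d) (i : Fin k) :
    d (.inl i) (.inr i) := by
  have hsub : {b : Fin k | d.r (.inr b) (.inl i)} ⊆ {a : Fin k | d.r (.inl a) (.inl i)} := by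
    intro m hm
    have h1 : d (.inl i) (.inr m) := d.symm' hm
    have h2 : d (.inl i) (.inl m) := L1 hU hI h1 (d.refl' _)
    exact d.symm' h2
  have hcard := hU (.inl i)
  have heq : {b : Fin k | d.r (.inr b) (.inl i)} = {a : Fin k | d.r (.inl a) (.inl i)} :=
    Set.eq_of_subset_of_ncard_le hsub hcard.le (Set.toFinite _)
  have : i ∈ {b : Fin k | d.r (.inr b) (.inl i)} := by rw [heq]; exact d.refl' _
  exact d.symm' this

lemma eq_ePart_topPart (hU : IsUniform k d) (hI : ubpMul d d = d) :
    ePart (Setoid.comap Sum.inl d) = d := by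
  apply Setoid.ext
  rintro (a | a) (b | b)
  · exact Iff.rfl
  · constructor
    · intro h
      exact d.trans' (h : d (Sum.inl a) (Sum.inl b)) (R_refl hU hI b)
    · intro h
      exact d.trans' h (d.symm' (R_refl hU hI b))
  · constructor
    · intro h
      exact d.trans' (d.symm' (R_refl hU hI a)) (h : d (Sum.inl a) (Sum.inl b))
    · intro h
      exact d.trans' (R_refl hU hI a) h
  · constructor
    · intro h
      exact d.trans' (d.symm' (R_refl hU hI a))
        (d.trans' (h : d (Sum.inl a) (Sum.inl b)) (R_refl hU hI b))
    · intro h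
      exact d.trans' (R_refl hU hI a) (d.trans' h (d.symm' (R_refl hU hI b)))

lemma isUniform_ePart (π : Setoid (Fin k)) : IsUniform k (ePart π) := by
  intro x
  have h1 : {a : Fin k | (ePart π).r (.inl a) x} = {a : Fin k | π a (Sum.elim id id x)} := rfl
  have h2 : {b : Fin k | (ePart π).r (.inr b) x} = {b : Fin k | π b (Sum.elim id id x)} := rfl
  rw [h1, h2]

end Idem

/-- `π ↦ e_π` is a monoid isomorphism from the lattice of set
partitions of `[k]` under join onto the idempotents of `U_k` under the diagram
product; in particular `e_π · e_γ = e_{π ∨ γ}`. -/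
theorem ePart_monoid_iso (k : ℕ) :
    Function.Injective (ePart (k := k)) ∧
    (∀ π γ : Setoid (Fin k), ubpMul (ePart π) (ePart γ) = ePart (π ⊔ γ)) ∧
    ePart (⊥ : Setoid (Fin k)) = ubpOne k ∧
    Set.range (ePart (k := k)) =
      {d : Setoid (Fin k ⊕ Fin k) | IsUniform k d ∧ ubpMul d d = d} := by
  refine ⟨?_, fun π γ => ubpMul_ePart π γ, ?_, ?_⟩
  · intro π γ h
    apply Setoid.ext; intro a b
    have : (ePart π) (Sum.inl a) (Sum.inl b) ↔ (ePart γ) (Sum.inl a) (Sum.inl b) := by rw [h]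
    exact this
  · apply Setoid.ext; intro x y
    show (⊥ : Setoid (Fin k)) (Sum.elim id id x) (Sum.elim id id y) ↔
      Sum.elim id id x = Sum.elim id id y
    rw [Setoid.bot_def]
  · ext d
    constructor
    · rintro ⟨π, rfl⟩
      exact ⟨isUniform_ePart π, by rw [ubpMul_ePart, sup_idem]⟩
    · rintro ⟨hU, hI⟩
      exact ⟨Setoid.comap Sum.inl d, eq_ePart_topPart hU hI⟩
end

section
/- Every uniform block permutation d ∈ U_k factors as d = e_{top(d)} · σ = σ · e_{bot(d)} for any permutation σ ∈ S_k satisfying σ(B ∩ [k]) = B̄ ∩ [k] for every block B of d. Consequently U_k = E(U_k)·S_k = S_k·E(U_k), i.e., U_k is a factorizable monoid. -/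
open Sum

section Aux

variable {k : ℕ}

/-- Generic factorization lemma. -/
lemma factor_aux (d e p : Setoid (Fin k ⊕ Fin k))
    (φ : Fin k ⊕ (Fin k ⊕ Fin k) → Quotient d)
    (h12 : ∀ u v, e u v → φ (row12 k u) = φ (row12 k v))
    (h23 : ∀ u v, p u v → φ (row23 k u) = φ (row23 k v))
    (h13 : ∀ x, φ (row13 k x) = Quotient.mk d x)
    (hfwd : ∀ x y, d x y →
      (liftSetoid k (row12 k) e ⊔ liftSetoid k (row23 k) p) (row13 k x) (row13 k y)) :
    d = ubpMul e p := by
  have hle : (liftSetoid k (row12 k) e ⊔ liftSetoid k (row23 k) p) ≤ Setoid.ker φ := by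
    apply sup_le
    · apply Setoid.eqvGen_le
      rintro x y ⟨a, b, hab, rfl, rfl⟩
      exact h12 a b hab
    · apply Setoid.eqvGen_le
      rintro x y ⟨a, b, hab, rfl, rfl⟩
      exact h23 a b hab
  ext x y
  constructor
  · exact hfwd x y
  · intro h
    have hφ : φ (row13 k x) = φ (row13 k y) := hle h
    rw [h13, h13] at hφ
    exact Quotient.exact hφ

lemma base12 (e p : Setoid (Fin k ⊕ Fin k)) {u v : Fin k ⊕ Fin k} (h : e u v) :
    (liftSetoid k (row12 k) e ⊔ liftSetoid k (row23 k) p) (row12 k u) (row12 k v) :=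
  have hle : liftSetoid k (row12 k) e ≤ liftSetoid k (row12 k) e ⊔ liftSetoid k (row23 k) p :=
    le_sup_left
  hle (Relation.EqvGen.rel _ _ ⟨u, v, h, rfl, rfl⟩)

lemma base23 (e p : Setoid (Fin k ⊕ Fin k)) {u v : Fin k ⊕ Fin k} (h : p u v) :
    (liftSetoid k (row12 k) e ⊔ liftSetoid k (row23 k) p) (row23 k u) (row23 k v) :=
  have hle : liftSetoid k (row23 k) p ≤ liftSetoid k (row12 k) e ⊔ liftSetoid k (row23 k) p :=
    le_sup_right
  hle (Relation.EqvGen.rel _ _ ⟨u, v, h, rfl, rfl⟩)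

lemma factor_left (d : Setoid (Fin k ⊕ Fin k)) (σ : Equiv.Perm (Fin k))
    (hσ : ∀ i : Fin k, d (.inl i) (.inr (σ i))) :
    d = ubpMul (ePart (topPart d)) (permToUBP σ) := by
  set e := ePart (topPart d) with he
  set p := permToUBP σ with hp
  set S := liftSetoid k (row12 k) e ⊔ liftSetoid k (row23 k) p with hS
  have erel : ∀ u v : Fin k ⊕ Fin k,
      d (.inl (Sum.elim id id u)) (.inl (Sum.elim id id v)) → e u v := fun u v h => h
  have prel : ∀ u v : Fin k ⊕ Fin k,
      Sum.elim (fun i => σ i) id u = Sum.elim (fun i => σ i) id v → p u v := fun u v h => h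
  -- key auxiliary S-moves
  have t2m : ∀ a b : Fin k, d (.inl a) (.inl b) → S (.inl a) (.inr (.inl b)) :=
    fun a b h => base12 e p (u := .inl a) (v := .inr b) (erel _ _ h)
  have m2b : ∀ a : Fin k, S (.inr (.inl a)) (.inr (.inr (σ a))) :=
    fun a => base23 e p (u := .inl a) (v := .inr (σ a)) (prel _ _ rfl)
  have m2b' : ∀ c : Fin k, S (.inr (.inl (σ.symm c))) (.inr (.inr c)) := by
    intro c
    have := m2b (σ.symm c)
    rwa [Equiv.apply_symm_apply] at this
  have midmid : ∀ a b : Fin k, d (.inl a) (.inl b) → S (.inr (.inl a)) (.inr (.inl b)) :=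
    fun a b h => base12 e p (u := .inr a) (v := .inr b) (erel _ _ h)
  have hσ' : ∀ c : Fin k, d (.inl (σ.symm c)) (.inr c) := by
    intro c
    have := hσ (σ.symm c)
    rwa [Equiv.apply_symm_apply] at this
  have b2b : ∀ a b : Fin k, d (.inr a) (.inr b) → S (.inr (.inr a)) (.inr (.inr b)) := by
    intro a b h
    refine S.trans' (S.symm' (m2b' a)) (S.trans' ?_ (m2b' b))
    exact midmid _ _ (d.trans' (d.trans' (hσ' a) h) (d.symm' (hσ' b)))
  have t2b : ∀ a b : Fin k, d (.inl a) (.inr b) → S (.inl a) (.inr (.inr b)) := by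
    intro a b h
    refine S.trans' (t2m a a (d.refl _)) (S.trans' (m2b a) (b2b _ _ ?_))
    exact d.trans' (d.symm' (hσ a)) h
  apply factor_aux d e p
    (Sum.elim (fun a => Quotient.mk d (.inl a))
      (Sum.elim (fun b => Quotient.mk d (.inl b)) (fun c => Quotient.mk d (.inr c))))
  · rintro (a | a) (b | b) h <;> exact Quotient.sound h
  · rintro (a | a) (b | b) h
    · have h' : a = b := σ.injective h
      subst h'; rfl
    · have h' : σ a = b := h
      subst h'
      exact Quotient.sound (hσ a)
    · have h' : σ b = a := h.symm
      subst h'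
      exact (Quotient.sound (hσ b)).symm
    · have h' : a = b := h
      subst h'; rfl
  · rintro (a | b) <;> rfl
  · rintro (a | a) (b | b) h
    · exact base12 e p (u := .inl a) (v := .inl b) (erel _ _ h)
    · exact t2b a b h
    · exact S.symm' (t2b b a (d.symm' h))
    · exact b2b a b h

lemma factor_right (d : Setoid (Fin k ⊕ Fin k)) (σ : Equiv.Perm (Fin k))
    (hσ : ∀ i : Fin k, d (.inl i) (.inr (σ i))) :
    d = ubpMul (permToUBP σ) (ePart (botPart d)) := by
  set e := permToUBP σ with he
  set p := ePart (botPart d) with hp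
  set S := liftSetoid k (row12 k) e ⊔ liftSetoid k (row23 k) p with hS
  have erel : ∀ u v : Fin k ⊕ Fin k,
      Sum.elim (fun i => σ i) id u = Sum.elim (fun i => σ i) id v → e u v := fun u v h => h
  have prel : ∀ u v : Fin k ⊕ Fin k,
      d (.inr (Sum.elim id id u)) (.inr (Sum.elim id id v)) → p u v := fun u v h => h
  have t2m : ∀ a : Fin k, S (.inl a) (.inr (.inl (σ a))) :=
    fun a => base12 e p (u := .inl a) (v := .inr (σ a)) (erel _ _ rfl)
  have midmid : ∀ a b : Fin k, d (.inr a) (.inr b) → S (.inr (.inl a)) (.inr (.inl b)) :=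
    fun a b h => base23 e p (u := .inl a) (v := .inl b) (prel _ _ h)
  have m2b : ∀ a b : Fin k, d (.inr a) (.inr b) → S (.inr (.inl a)) (.inr (.inr b)) :=
    fun a b h => base23 e p (u := .inl a) (v := .inr b) (prel _ _ h)
  have b2b : ∀ a b : Fin k, d (.inr a) (.inr b) → S (.inr (.inr a)) (.inr (.inr b)) :=
    fun a b h => base23 e p (u := .inr a) (v := .inr b) (prel _ _ h)
  have t2b : ∀ a b : Fin k, d (.inl a) (.inr b) → S (.inl a) (.inr (.inr b)) := by
    intro a b h
    exact S.trans' (t2m a) (m2b _ _ (d.trans' (d.symm' (hσ a)) h))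
  apply factor_aux d e p
    (Sum.elim (fun a => Quotient.mk d (.inl a))
      (Sum.elim (fun b => Quotient.mk d (.inr b)) (fun c => Quotient.mk d (.inr c))))
  · rintro (a | a) (b | b) h
    · have h' : a = b := σ.injective h
      subst h'; rfl
    · have h' : σ a = b := h
      subst h'
      exact Quotient.sound (hσ a)
    · have h' : σ b = a := h.symm
      subst h'
      exact (Quotient.sound (hσ b)).symm
    · have h' : a = b := h
      subst h'; rfl
  · rintro (a | a) (b | b) h <;> exact Quotient.sound h
  · rintro (a | b) <;> rfl
  · rintro (a | a) (b | b) h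
    · refine S.trans' (t2m a) (S.trans' ?_ (S.symm' (t2m b)))
      exact midmid _ _ (d.trans' (d.trans' (d.symm' (hσ a)) h) (hσ b))
    · exact t2b a b h
    · exact S.symm' (t2b b a (d.symm' h))
    · exact b2b a b h

lemma exists_perm (d : Setoid (Fin k ⊕ Fin k)) (hd : IsUniform k d) :
    ∃ σ : Equiv.Perm (Fin k), ∀ i : Fin k, d (.inl i) (.inr (σ i)) := by
  classical
  set T : Fin k → Quotient d := fun i => Quotient.mk d (.inl i) with hT
  set B : Fin k → Quotient d := fun j => Quotient.mk d (.inr j) with hB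
  have hcard : ∀ q : Quotient d, Nat.card {a // T a = q} = Nat.card {b // B b = q} := by
    intro q
    induction q using Quotient.ind with
    | _ x =>
      have h := hd x
      have e1 : {a // T a = Quotient.mk d x} ≃ {a : Fin k | d (.inl a) x} :=
        Equiv.subtypeEquivRight (fun a => by
          simp only [hT, Set.mem_setOf_eq]
          exact ⟨fun hq => Quotient.exact hq, fun hr => Quotient.sound hr⟩)
      have e2 : {b // B b = Quotient.mk d x} ≃ {b : Fin k | d (.inr b) x} :=
        Equiv.subtypeEquivRight (fun b => by
          simp only [hB, Set.mem_setOf_eq]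
          exact ⟨fun hq => Quotient.exact hq, fun hr => Quotient.sound hr⟩)
      rw [Nat.card_congr e1, Nat.card_congr e2]
      exact h
  have hfib : ∀ q : Quotient d, Nonempty ({a // T a = q} ≃ {b // B b = q}) := by
    intro q
    have : Fintype {a // T a = q} := Fintype.ofFinite _
    have : Fintype {b // B b = q} := Fintype.ofFinite _
    refine ⟨Fintype.equivOfCardEq ?_⟩
    rw [← Nat.card_eq_fintype_card, ← Nat.card_eq_fintype_card]
    exact hcard q
  set σ : Fin k ≃ Fin k := Equiv.ofFiberEquiv (fun q => (hfib q).some) with hσdef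
  refine ⟨σ, fun i => ?_⟩
  have := Equiv.ofFiberEquiv_map (fun q => (hfib q).some) i
  have hBT : B (σ i) = T i := this
  exact Quotient.exact hBT.symm

end Aux

/-- Every uniform block permutation factors as
`d = e_{top(d)} σ = σ e_{bot(d)}` for any permutation `σ` matching top blocks to
bottom blocks; consequently `U_k = E(U_k)·S_k = S_k·E(U_k)` is factorizable. -/
theorem ubp_factorizable (k : ℕ) :
    (∀ d : Setoid (Fin k ⊕ Fin k), IsUniform k d → ∀ σ : Equiv.Perm (Fin k),
      (∀ i : Fin k, d.r (.inl i) (.inr (σ i))) →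
        d = ubpMul (ePart (topPart d)) (permToUBP σ) ∧
        d = ubpMul (permToUBP σ) (ePart (botPart d))) ∧
    (∀ d : Setoid (Fin k ⊕ Fin k), IsUniform k d →
      (∃ (π : Setoid (Fin k)) (σ : Equiv.Perm (Fin k)),
        d = ubpMul (ePart π) (permToUBP σ)) ∧
      (∃ (π : Setoid (Fin k)) (σ : Equiv.Perm (Fin k)),
        d = ubpMul (permToUBP σ) (ePart π))) := by
  refine ⟨fun d _ σ hσ => ⟨factor_left d σ hσ, factor_right d σ hσ⟩, fun d hd => ?_⟩
  obtain ⟨σ, hσ⟩ := exists_perm d hd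
  exact ⟨⟨topPart d, σ, factor_left d σ hσ⟩, ⟨botPart d, σ, factor_right d σ hσ⟩⟩
end

section
/- U_k is an inverse monoid: for each d ∈ U_k, the element d̃ obtained by swapping barred and unbarred elements (reflecting the diagram) is the unique element satisfying d·d̃·d = d and d̃·d·d̃ = d̃. -/
open Sum

namespace UBP

variable {k : ℕ}

abbrev S (k : ℕ) := Fin k ⊕ Fin k

/-- every element has a neighbour on each row -/
def Spanning (d : Setoid (S k)) : Prop :=
  (∀ x : S k, ∃ j, d.r x (.inr j)) ∧ (∀ x : S k, ∃ i, d.r x (.inl i))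

def Mrel (d d' : Setoid (S k)) : S k → Fin k → Prop
  | .inl i, j => d.r (.inl i) (.inr j)
  | .inr l, j => d'.r (.inl j) (.inr l)

theorem mul_r {d d' : Setoid (S k)} (hd : Spanning d) (hd' : Spanning d') (x y : S k) :
    (ubpMul d d').r x y ↔
      ∃ j j', Mrel d d' x j ∧ (botPart d ⊔ topPart d').r j j' ∧ Mrel d d' y j' := by
  classical
  set m : Setoid (Fin k) := botPart d ⊔ topPart d' with hm
  have hbotle : botPart d ≤ m := le_sup_left
  have htople : topPart d' ≤ m := le_sup_right
  -- the auxiliary "middle neighbour" relation on the three-row set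
  let Mw : (Fin k ⊕ S k) → Fin k → Prop := fun w j =>
    match w with
    | .inl i => d.r (.inl i) (.inr j)
    | .inr (.inl j₀) => m.r j₀ j
    | .inr (.inr l) => d'.r (.inl j) (.inr l)
  have mw_uniq : ∀ w j j', Mw w j → Mw w j' → m.r j j' := by
    intro w j j' h h'
    match w with
    | .inl i => exact hbotle (d.trans' (d.symm' h) h')
    | .inr (.inl j₀) => exact m.trans' (m.symm' h) h'
    | .inr (.inr l) => exact htople (d'.trans' h (d'.symm' h'))
  have mw_ex : ∀ w, ∃ j, Mw w j := by
    intro w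
    match w with
    | .inl i => exact hd.1 (.inl i)
    | .inr (.inl j₀) => exact ⟨j₀, m.refl' j₀⟩
    | .inr (.inr l) => obtain ⟨j, hj⟩ := hd'.2 (.inr l); exact ⟨j, d'.symm' hj⟩
  let T : Setoid (Fin k ⊕ S k) :=
    ⟨fun w w' => ∃ j j', Mw w j ∧ m.r j j' ∧ Mw w' j',
     ⟨fun w => by obtain ⟨j, hj⟩ := mw_ex w; exact ⟨j, j, hj, m.refl' j, hj⟩,
      fun {w w'} h => by
        obtain ⟨j, j', h1, h2, h3⟩ := h; exact ⟨j', j, h3, m.symm' h2, h1⟩,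
      fun {a b c} h h' => by
        obtain ⟨j1, j1', h1, h2, h3⟩ := h
        obtain ⟨j2, j2', h4, h5, h6⟩ := h'
        exact ⟨j1, j2', h1, m.trans' h2 (m.trans' (mw_uniq b _ _ h3 h4) h5), h6⟩⟩⟩
  set J : Setoid (Fin k ⊕ S k) := liftSetoid k (row12 k) d ⊔ liftSetoid k (row23 k) d' with hJ
  show J.r (row13 k x) (row13 k y) ↔ _
  constructor
  · intro h
    have hle : J ≤ T := by
      refine sup_le (Setoid.eqvGen_le ?_) (Setoid.eqvGen_le ?_)
      · rintro w w' ⟨a, b, hab, rfl, rfl⟩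
        match a, b with
        | .inl i, .inl i' =>
          obtain ⟨j, hj⟩ := hd.1 (.inl i)
          obtain ⟨j', hj'⟩ := hd.1 (.inl i')
          exact ⟨j, j', hj, hbotle (d.trans' (d.symm' hj) (d.trans' hab hj')), hj'⟩
        | .inl i, .inr j₀ => exact ⟨j₀, j₀, hab, m.refl' j₀, m.refl' j₀⟩
        | .inr j₀, .inl i => exact ⟨j₀, j₀, m.refl' j₀, m.refl' j₀, d.symm' hab⟩
        | .inr j₀, .inr j₁ => exact ⟨j₀, j₁, m.refl' j₀, hbotle hab, m.refl' j₁⟩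
      · rintro w w' ⟨a, b, hab, rfl, rfl⟩
        match a, b with
        | .inl j₀, .inl j₁ => exact ⟨j₀, j₁, m.refl' j₀, htople hab, m.refl' j₁⟩
        | .inl j₀, .inr l => exact ⟨j₀, j₀, m.refl' j₀, m.refl' j₀, hab⟩
        | .inr l, .inl j₀ => exact ⟨j₀, j₀, d'.symm' hab, m.refl' j₀, m.refl' j₀⟩
        | .inr l, .inr l' =>
          obtain ⟨j, hj⟩ := hd'.2 (.inr l)
          obtain ⟨j', hj'⟩ := hd'.2 (.inr l')
          refine ⟨j, j', d'.symm' hj, htople ?_, d'.symm' hj'⟩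
          exact d'.trans' (d'.symm' hj) (d'.trans' hab hj')
    obtain ⟨j, j', h1, h2, h3⟩ := hle h
    refine ⟨j, j', ?_, h2, ?_⟩
    · match x, h1 with
      | .inl i, h1 => exact h1
      | .inr l, h1 => exact h1
    · match y, h3 with
      | .inl i, h3 => exact h3
      | .inr l, h3 => exact h3
  · rintro ⟨j, j', h1, h2, h3⟩
    have e12 : ∀ {a b : S k}, d.r a b → J.r (row12 k a) (row12 k b) := fun h =>
      Setoid.le_def.mp le_sup_left (Relation.EqvGen.rel _ _ ⟨_, _, h, rfl, rfl⟩)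
    have e23 : ∀ {a b : S k}, d'.r a b → J.r (row23 k a) (row23 k b) := fun h =>
      Setoid.le_def.mp le_sup_right (Relation.EqvGen.rel _ _ ⟨_, _, h, rfl, rfl⟩)
    have hM : ∀ (z : S k) (j : Fin k), Mrel d d' z j → J.r (row13 k z) (.inr (.inl j)) := by
      intro z j h
      match z, h with
      | .inl i, h => exact e12 (a := .inl i) (b := .inr j) h
      | .inr l, h => exact J.symm' (e23 (a := .inl j) (b := .inr l) h)
    have hmid : ∀ {a b : Fin k}, m.r a b → J.r (.inr (.inl a)) (.inr (.inl b)) := by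
      intro a b h
      have hle : m ≤ Setoid.comap (fun j : Fin k => (.inr (.inl j) : Fin k ⊕ S k)) J := by
        refine sup_le ?_ ?_
        · intro a b hab; exact e12 (a := .inr a) (b := .inr b) hab
        · intro a b hab; exact e23 (a := .inl a) (b := .inl b) hab
      exact hle h
    exact J.trans' (hM x j h1) (J.trans' (hmid h2) (J.symm' (hM y j' h3)))



theorem exMrel {d d' : Setoid (S k)} (hd : Spanning d) (hd' : Spanning d') (x : S k) :
    ∃ j, Mrel d d' x j := by
  match x with
  | .inl i => exact hd.1 (.inl i)
  | .inr l => obtain ⟨j, hj⟩ := hd'.2 (.inr l); exact ⟨j, d'.symm' hj⟩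

theorem spanning_mul {d d' : Setoid (S k)} (hd : Spanning d) (hd' : Spanning d') :
    Spanning (ubpMul d d') := by
  constructor
  · intro x
    obtain ⟨j, hj⟩ := exMrel hd hd' x
    obtain ⟨l, hl⟩ := hd'.1 (.inl j)
    exact ⟨l, (mul_r hd hd' x (.inr l)).mpr ⟨j, j, hj, (botPart d ⊔ topPart d').refl' j, hl⟩⟩
  · intro x
    obtain ⟨j, hj⟩ := exMrel hd hd' x
    obtain ⟨i, hi⟩ := hd.2 (.inr j)
    exact ⟨i, (mul_r hd hd' x (.inl i)).mpr
      ⟨j, j, hj, (botPart d ⊔ topPart d').refl' j, d.symm' hi⟩⟩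

theorem topPart_le_mul {d d' : Setoid (S k)} (hd : Spanning d) (hd' : Spanning d')
    {i i' : Fin k} (h : d.r (.inl i) (.inl i')) : (ubpMul d d').r (.inl i) (.inl i') := by
  obtain ⟨j, hj⟩ := hd.1 (.inl i)
  exact (mul_r hd hd' _ _).mpr ⟨j, j, hj, (botPart d ⊔ topPart d').refl' j,
    d.trans' (d.symm' h) hj⟩

theorem botPart_le_mul {d d' : Setoid (S k)} (hd : Spanning d) (hd' : Spanning d')
    {l l' : Fin k} (h : d'.r (.inr l) (.inr l')) : (ubpMul d d').r (.inr l) (.inr l') := by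
  obtain ⟨j, hj⟩ := hd'.2 (.inr l)
  exact (mul_r hd hd' _ _).mpr ⟨j, j, d'.symm' hj, (botPart d ⊔ topPart d').refl' j,
    d'.trans' (d'.symm' hj) h⟩

theorem claimL1 {d d' : Setoid (S k)} (hd : Spanning d) (hd' : Spanning d')
    (h : ∀ i i', (ubpMul d d').r (.inl i) (.inl i') → d.r (.inl i) (.inl i'))
    {j j' : Fin k} (hb : d'.r (.inl j) (.inl j')) : d.r (.inr j) (.inr j') := by
  obtain ⟨i, hi⟩ := hd.2 (.inr j)
  obtain ⟨i', hi'⟩ := hd.2 (.inr j')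
  have hmul : (ubpMul d d').r (.inl i) (.inl i') :=
    (mul_r hd hd' _ _).mpr ⟨j, j', d.symm' hi,
      Setoid.le_def.mp le_sup_right hb, d.symm' hi'⟩
  exact d.trans' hi (d.trans' (h _ _ hmul) (d.symm' hi'))

theorem claimL2 {d d' : Setoid (S k)} (hd : Spanning d) (hd' : Spanning d')
    (h : ∀ l l', (ubpMul d d').r (.inr l) (.inr l') → d'.r (.inr l) (.inr l'))
    {j j' : Fin k} (hb : d.r (.inr j) (.inr j')) : d'.r (.inl j) (.inl j') := by
  obtain ⟨l, hl⟩ := hd'.1 (.inl j)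
  obtain ⟨l', hl'⟩ := hd'.1 (.inl j')
  have hmul : (ubpMul d d').r (.inr l) (.inr l') :=
    (mul_r hd hd' _ _).mpr ⟨j, j', hl, Setoid.le_def.mp le_sup_left hb, hl'⟩
  exact d'.trans' hl (d'.trans' (h _ _ hmul) (d'.symm' hl'))

theorem eq_of_cross {d e : Setoid (S k)} (hd : Spanning d) (he : Spanning e)
    (h : ∀ i l, d.r (.inl i) (.inr l) ↔ e.r (.inl i) (.inr l)) : d = e := by
  refine Setoid.ext fun x y => ?_
  match x, y with
  | .inl i, .inl i' =>
    constructor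
    · intro hh
      obtain ⟨l, hl⟩ := hd.1 (.inl i)
      exact e.trans' ((h i l).mp hl)
        (e.symm' ((h i' l).mp (d.trans' (d.symm' hh) hl)))
    · intro hh
      obtain ⟨l, hl⟩ := he.1 (.inl i)
      exact d.trans' ((h i l).mpr hl)
        (d.symm' ((h i' l).mpr (e.trans' (e.symm' hh) hl)))
  | .inl i, .inr l => exact h i l
  | .inr l, .inl i =>
    exact ⟨fun hh => e.symm' ((h i l).mp (d.symm' hh)),
      fun hh => d.symm' ((h i l).mpr (e.symm' hh))⟩
  | .inr l, .inr l' =>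
    constructor
    · intro hh
      obtain ⟨i, hi⟩ := hd.2 (.inr l)
      exact e.trans' (e.symm' ((h i l).mp (d.symm' hi)))
        ((h i l').mp (d.trans' (d.symm' hi) hh))
    · intro hh
      obtain ⟨i, hi⟩ := he.2 (.inr l)
      exact d.trans' (d.symm' ((h i l).mpr (e.symm' hi)))
        ((h i l').mpr (e.trans' (e.symm' hi) hh))

section key1
variable {d : Setoid (S k)} (hd : Spanning d)

theorem key1 {d : Setoid (S k)} (hd : Spanning d) :
    ubpMul (ubpMul d (reflectUBP d)) d = d := by
  set R := reflectUBP d with hR'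
  have hR : Spanning R := ⟨fun x => hd.2 (Sum.swap x), fun x => hd.1 (Sum.swap x)⟩
  have hmR : ∀ {a b : Fin k}, (botPart d ⊔ topPart R).r a b → d.r (.inr a) (.inr b) := by
    intro a b hab
    have hle : (botPart d ⊔ topPart R) ≤ botPart d :=
      sup_le le_rfl (Setoid.le_def.mpr fun {x y} h => h)
    exact Setoid.le_def.mp hle hab
  set Q := ubpMul d R with hQ'
  have hQ : Spanning Q := spanning_mul hd hR
  have Qcross : ∀ i j, Q.r (.inl i) (.inr j) ↔ d.r (.inl i) (.inl j) := by
    intro i j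
    rw [hQ', mul_r hd hR]
    constructor
    · rintro ⟨a, b, h1, h2, h3⟩
      exact d.trans' h1 (d.trans' (hmR h2) h3)
    · intro h
      obtain ⟨a, ha⟩ := hd.1 (.inl i)
      exact ⟨a, a, ha, (botPart d ⊔ topPart R).refl' a,
        d.trans' (d.symm' ha) h⟩
  have Qbot : ∀ l l', Q.r (.inr l) (.inr l') ↔ d.r (.inl l) (.inl l') := by
    intro l l'
    rw [hQ', mul_r hd hR]
    constructor
    · rintro ⟨a, b, h1, h2, h3⟩
      exact d.trans' (d.symm' h1) (d.trans' (hmR h2) h3)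
    · intro h
      obtain ⟨a, ha⟩ := hd.1 (.inl l)
      exact ⟨a, a, d.symm' ha, (botPart d ⊔ topPart R).refl' a,
        d.trans' (d.symm' ha) h⟩
  have hm2 : ∀ {a b : Fin k}, (botPart Q ⊔ topPart d).r a b → d.r (.inl a) (.inl b) := by
    intro a b hab
    have hle : (botPart Q ⊔ topPart d) ≤ topPart d :=
      sup_le (Setoid.le_def.mpr fun {x y} h => (Qbot x y).mp h)
        (le_refl (topPart d))
    exact Setoid.le_def.mp hle hab
  refine Setoid.ext fun x y => ?_
  rw [show (ubpMul Q d) x y ↔ (ubpMul Q d).r x y from Iff.rfl, mul_r hQ hd]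
  match x, y with
  | .inl i, .inl i' =>
    constructor
    · rintro ⟨j, j', h1, h2, h3⟩
      have g1 : d.r (.inl i) (.inl j) := (Qcross i j).mp h1
      have g3 : d.r (.inl i') (.inl j') := (Qcross i' j').mp h3
      exact d.trans' g1 (d.trans' (hm2 h2) (d.symm' g3))
    · intro h
      exact ⟨i, i', (Qcross i i).mpr (d.refl' _),
        Setoid.le_def.mp le_sup_right h, (Qcross i' i').mpr (d.refl' _)⟩
  | .inl i, .inr l =>
    constructor
    · rintro ⟨j, j', h1, h2, h3⟩
      exact d.trans' ((Qcross i j).mp h1) (d.trans' (hm2 h2) h3)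
    · intro h
      exact ⟨i, i, (Qcross i i).mpr (d.refl' _),
        (botPart Q ⊔ topPart d).refl' i, h⟩
  | .inr l, .inl i =>
    constructor
    · rintro ⟨j, j', h1, h2, h3⟩
      exact d.trans' (d.symm' h1) (d.trans' (hm2 h2) (d.symm' ((Qcross i j').mp h3)))
    · intro h
      exact ⟨i, i, d.symm' h, (botPart Q ⊔ topPart d).refl' i,
        (Qcross i i).mpr (d.refl' _)⟩
  | .inr l, .inr l' =>
    constructor
    · rintro ⟨j, j', h1, h2, h3⟩
      exact d.trans' (d.symm' h1) (d.trans' (hm2 h2) h3)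
    · intro h
      obtain ⟨j, hj⟩ := hd.2 (.inr l)
      exact ⟨j, j, d.symm' hj, (botPart Q ⊔ topPart d).refl' j,
        d.trans' (d.symm' hj) h⟩

end key1

theorem cross_step {d e : Setoid (S k)} (hd : Spanning d) (he : Spanning e)
    (hde : ubpMul (ubpMul d e) d = d) (hed : ubpMul (ubpMul e d) e = e)
    {i l : Fin k} (h : d.r (.inl i) (.inr l)) : e.r (.inl l) (.inr i) := by
  have hDE : Spanning (ubpMul d e) := spanning_mul hd he
  have hED : Spanning (ubpMul e d) := spanning_mul he hd
  have C1 : ∀ {j j'}, e.r (.inl j) (.inl j') → d.r (.inr j) (.inr j') := by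
    intro j j' hb
    refine claimL1 hd he (fun i i' hm => ?_) hb
    have hh : (ubpMul (ubpMul d e) d).r (.inl i) (.inl i') := topPart_le_mul hDE hd hm
    rwa [hde] at hh
  have C2 : ∀ {j j'}, d.r (.inl j) (.inl j') → e.r (.inr j) (.inr j') := by
    intro j j' hb
    refine claimL1 he hd (fun i i' hm => ?_) hb
    have hh : (ubpMul (ubpMul e d) e).r (.inl i) (.inl i') := topPart_le_mul hED he hm
    rwa [hed] at hh
  have C3 : ∀ {j j'}, (ubpMul d e).r (.inr j) (.inr j') → d.r (.inl j) (.inl j') := by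
    intro j j' hb
    refine claimL2 hDE hd (fun l l' hm => ?_) hb
    rwa [hde] at hm
  have C4 : ∀ {j j'}, (ubpMul e d).r (.inr j) (.inr j') → e.r (.inl j) (.inl j') := by
    intro j j' hb
    refine claimL2 hED he (fun l l' hm => ?_) hb
    rwa [hed] at hm
  have C5 : ∀ {j j'}, d.r (.inr j) (.inr j') → e.r (.inl j) (.inl j') := fun hb =>
    C4 (botPart_le_mul he hd hb)
  have h' : (ubpMul (ubpMul d e) d).r (.inl i) (.inr l) := by rw [hde]; exact h
  rw [mul_r hDE hd] at h'
  obtain ⟨j, j', h1, h2, h3⟩ := h'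
  have h2' : d.r (.inl j) (.inl j') := by
    have hle : (botPart (ubpMul d e) ⊔ topPart d) ≤ topPart d :=
      sup_le (Setoid.le_def.mpr fun {x y} hh => C3 hh) (le_refl (topPart d))
    exact Setoid.le_def.mp hle h2
  have h1' : (ubpMul d e).r (.inl i) (.inr j) := h1
  have h3'' : d.r (.inl j') (.inr l) := h3
  rw [mul_r hd he] at h1'
  obtain ⟨a, b, g1, g2, g3⟩ := h1'
  have g2' : d.r (.inr a) (.inr b) := by
    have hle : (botPart d ⊔ topPart e) ≤ botPart d :=
      sup_le (le_refl (botPart d)) (Setoid.le_def.mpr fun {x y} hh => C1 hh)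
    exact Setoid.le_def.mp hle g2
  have h3' : d.r (.inl j) (.inr l) := d.trans' h2' h3''
  have hib : d.r (.inl i) (.inr b) := d.trans' g1 g2'
  have hbl : d.r (.inr b) (.inr l) := d.trans' (d.symm' hib) h
  have elb : e.r (.inl l) (.inl b) := e.symm' (C5 hbl)
  have elj : e.r (.inl l) (.inr j) := e.trans' elb g3
  have dij : d.r (.inl i) (.inl j) := d.trans' h (d.symm' h3')
  have eij : e.r (.inr i) (.inr j) := C2 dij
  exact e.trans' elj (e.symm' eij)


theorem spanning_of_uniform {d : Setoid (S k)} (h : IsUniform k d) : Spanning d := by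
  constructor
  · intro x
    have hx : {b : Fin k | d.r (.inr b) x}.Nonempty := by
      match x with
      | .inr j => exact ⟨j, d.refl' _⟩
      | .inl i =>
        rw [← Set.ncard_pos (Set.toFinite _), ← h (.inl i),
          Set.ncard_pos (Set.toFinite _)]
        exact ⟨i, d.refl' _⟩
    obtain ⟨b, hb⟩ := hx
    exact ⟨b, d.symm' hb⟩
  · intro x
    have hx : {a : Fin k | d.r (.inl a) x}.Nonempty := by
      match x with
      | .inl i => exact ⟨i, d.refl' _⟩
      | .inr j =>
        rw [← Set.ncard_pos (Set.toFinite _), h (.inr j),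
          Set.ncard_pos (Set.toFinite _)]
        exact ⟨j, d.refl' _⟩
    obtain ⟨a, ha⟩ := hx
    exact ⟨a, d.symm' ha⟩

theorem reflect_reflect (d : Setoid (S k)) : reflectUBP (reflectUBP d) = d := by
  refine Setoid.ext fun x y => ?_
  show d.r (Sum.swap (Sum.swap x)) (Sum.swap (Sum.swap y)) ↔ d.r x y
  rw [Sum.swap_swap, Sum.swap_swap]

theorem uniform_reflect {d : Setoid (S k)} (h : IsUniform k d) :
    IsUniform k (reflectUBP d) := by
  intro x
  exact (h (Sum.swap x)).symm

theorem spanning_reflect {d : Setoid (S k)} (h : Spanning d) :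
    Spanning (reflectUBP d) := by
  constructor
  · intro x; exact h.2 (Sum.swap x)
  · intro x; exact h.1 (Sum.swap x)


end UBP

/-- `U_k` is an inverse monoid: the reflection `d̃` is the unique
uniform element with `d d̃ d = d` and `d̃ d d̃ = d̃`. -/
theorem ubp_inverse_monoid (k : ℕ) (d : Setoid (Fin k ⊕ Fin k)) (hd : IsUniform k d) :
    IsUniform k (reflectUBP d) ∧
    ubpMul (ubpMul d (reflectUBP d)) d = d ∧
    ubpMul (ubpMul (reflectUBP d) d) (reflectUBP d) = reflectUBP d ∧
    ∀ e : Setoid (Fin k ⊕ Fin k), IsUniform k e →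
      ubpMul (ubpMul d e) d = d → ubpMul (ubpMul e d) e = e → e = reflectUBP d := by
  have hsp := UBP.spanning_of_uniform hd
  have hspR := UBP.spanning_reflect hsp
  refine ⟨UBP.uniform_reflect hd, UBP.key1 hsp, ?_, ?_⟩
  · have h := UBP.key1 hspR
    rwa [UBP.reflect_reflect] at h
  · intro e he hde hed
    have hse := UBP.spanning_of_uniform he
    refine UBP.eq_of_cross hse hspR fun i l => ?_
    constructor
    · intro h
      exact d.symm' (UBP.cross_step hse hsp hed hde h)
    · intro h
      exact UBP.cross_step hsp hse hde hed (d.symm' h)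
end

section
/- If π is a set partition of [k] of type (1^{a_1} 2^{a_2} ... k^{a_k}), then the maximal subgroup G_{e_π} of U_k at e_π is isomorphic to the direct product of symmetric groups S_{a_1} × S_{a_2} × ··· × S_{a_k}. -/
open Sum

/-!
A diagram `d` with `topPart d = botPart d = π` that is uniform meets both rows in every block,
so its blocks correspond bijectively to the blocks of `π`, once through the top row and once
through the bottom row. Comparing the two correspondences gives a permutation `σ` of the blocks
of `π`, and uniformity says exactly that `σ` preserves block sizes. Conversely every such `σ`
comes from the diagram joining each top block `A` to the bottom block `σ⁻¹ A`, and stacking two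
of these diagrams composes the permutations, because every label of the stacked diagram is
already attained in its middle row. Finally, the size-preserving permutations of the blocks are
the products of permutations of the sets of blocks of each size `i`, of which there are `a_i`.
-/

open Equiv Function

namespace Equiv.Perm

variable {α ι : Type*}

def fiberwise (f : α → ι) : Subgroup (Perm α) where
  carrier := {σ | ∀ a, f (σ a) = f a}
  mul_mem' {σ τ} hσ hτ a := (hσ (τ a)).trans (hτ a)
  one_mem' _ := rfl
  inv_mem' {σ} hσ a := by simpa using (hσ (σ⁻¹ a)).symm

lemma mem_fiberwise {f : α → ι} {σ : Perm α} : σ ∈ fiberwise f ↔ ∀ a, f (σ a) = f a := Iff.rfl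

/-- `DomMulAct.stabilizerMulEquiv` starts from the opposite of the stabilizer of `f` in
`(Perm α)ᵈᵐᵃ`; the two reversals of the multiplication cancel, so this is `fiberwise f`. -/
noncomputable def fiberwiseEquivPi (f : α → ι) : fiberwise f ≃* ∀ i, Perm {a // f a = i} :=
  let toStabilizer : fiberwise f ≃* (MulAction.stabilizer (Perm α)ᵈᵐᵃ f)ᵐᵒᵖ :=
    { toFun σ := .op ⟨DomMulAct.mk σ.1, DomMulAct.mem_stabilizer_iff.mpr (funext σ.2)⟩
      invFun g := ⟨DomMulAct.mk.symm g.unop, congrFun (DomMulAct.mem_stabilizer_iff.mp g.unop.2)⟩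
      left_inv _ := rfl
      right_inv _ := rfl
      map_mul' _ _ := rfl }
  toStabilizer.trans (DomMulAct.stabilizerMulEquiv f)

end Equiv.Perm

namespace Setoid

variable {α β γ : Type*}

lemma ker_comp_of_injective {g : β → γ} (hg : Injective g) (f : α → β) :
    ker (g ∘ f) = ker f :=
  Setoid.ext fun _ _ => hg.eq_iff

lemma exists_equiv_of_ker_eq {r : Setoid α} {f : α → β} (hf : Surjective f) (h : ker f = r) :
    ∃ e : Quotient r ≃ β, ∀ a, e ⟦a⟧ = f a := by
  subst h
  exact ⟨quotientKerEquivOfSurjective f hf, fun _ => rfl⟩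

lemma coe_quotientEquivClasses (r : Setoid α) (q : Quotient r) :
    (r.quotientEquivClasses q : Set α) = {a | ⟦a⟧ = q} := by
  induction q using Quotient.ind with
  | _ b => ext a; simp [quotientEquivClasses_mk_eq, Quotient.eq]

end Setoid

section Diagrams

variable {k : ℕ}

lemma IsUniform.exists_inl_rel_iff {d : Setoid (Fin k ⊕ Fin k)} (hd : IsUniform k d)
    (x : Fin k ⊕ Fin k) : (∃ a, d.r (.inl a) x) ↔ ∃ b, d.r (.inr b) x := by
  change Set.Nonempty {a | d.r (.inl a) x} ↔ Set.Nonempty {b | d.r (.inr b) x}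
  rw [← Set.ncard_pos, ← Set.ncard_pos, hd x]

lemma IsUniform.surjective_mk_inl {d : Setoid (Fin k ⊕ Fin k)} (hd : IsUniform k d) :
    Surjective (Quotient.mk d ∘ Sum.inl) := by
  rintro ⟨x⟩
  obtain ⟨a, ha⟩ : ∃ a, d.r (.inl a) x := by
    rcases x with i | j
    · exact ⟨i, d.refl' _⟩
    · exact (hd.exists_inl_rel_iff _).mpr ⟨j, d.refl' _⟩
  exact ⟨a, Quotient.sound ha⟩

lemma IsUniform.surjective_mk_inr {d : Setoid (Fin k ⊕ Fin k)} (hd : IsUniform k d) :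
    Surjective (Quotient.mk d ∘ Sum.inr) := by
  rintro ⟨x⟩
  obtain ⟨b, hb⟩ : ∃ b, d.r (.inr b) x := by
    rcases x with i | j
    · exact (hd.exists_inl_rel_iff _).mp ⟨i, d.refl' _⟩
    · exact ⟨j, d.refl' _⟩
  exact ⟨b, Quotient.sound hb⟩

lemma ubpMul_ker {β : Type*} (Γ : Fin k ⊕ (Fin k ⊕ Fin k) → β)
    (hmid : ∀ x, ∃ m, Γ (.inr (.inl m)) = Γ x) :
    ubpMul (Setoid.ker (Γ ∘ row12 k)) (Setoid.ker (Γ ∘ row23 k)) = Setoid.ker (Γ ∘ row13 k) := by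
  set L := liftSetoid k (row12 k) (Setoid.ker (Γ ∘ row12 k)) ⊔
    liftSetoid k (row23 k) (Setoid.ker (Γ ∘ row23 k))
  have rel12 (a b) (h : Γ (row12 k a) = Γ (row12 k b)) : L.r (row12 k a) (row12 k b) :=
    le_sup_left (a := liftSetoid k (row12 k) _) (Relation.EqvGen.rel _ _ ⟨a, b, h, rfl, rfl⟩)
  have rel23 (a b) (h : Γ (row23 k a) = Γ (row23 k b)) : L.r (row23 k a) (row23 k b) :=
    le_sup_right (a := liftSetoid k (row12 k) _) (Relation.EqvGen.rel _ _ ⟨a, b, h, rfl, rfl⟩)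
  have rel_mid (x m) (h : Γ x = Γ (.inr (.inl m))) : L.r x (.inr (.inl m)) := by
    rcases x with i | m' | j
    · exact rel12 (.inl i) (.inr m) h
    · exact rel12 (.inr m') (.inr m) h
    · exact rel23 (.inr j) (.inl m) h
  have hL : L = Setoid.ker Γ := by
    refine le_antisymm (sup_le ?_ ?_) ?_
    · exact Setoid.eqvGen_le fun _ _ ⟨_, _, h, hx, hy⟩ => hx ▸ hy ▸ h
    · exact Setoid.eqvGen_le fun _ _ ⟨_, _, h, hx, hy⟩ => hx ▸ hy ▸ h
    · intro x y hxy
      obtain ⟨m, hm⟩ := hmid x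
      exact L.trans' (rel_mid x m hm.symm) (L.symm' (rel_mid y m (hm.trans hxy).symm))
  change Setoid.comap (row13 k) L = _
  rw [hL]
  rfl

open Equiv.Perm

variable {π : Setoid (Fin k)}

variable (π) in
noncomputable def blockSize (q : Quotient π) : Fin (k + 1) :=
  ⟨{a | ⟦a⟧ = q}.ncard, Nat.lt_succ_of_le <| (Set.ncard_le_card _).trans_eq (Nat.card_fin k)⟩

variable (π) in
noncomputable def blockSizeFiberEquiv (i : Fin (k + 1)) :
    {q // blockSize π q = i} ≃ Fin (Set.ncard {C ∈ π.classes | C.ncard = (i : ℕ)}) :=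
  Finite.equivFinOfCardEq <| Nat.card_congr <|
    (Equiv.subtypeEquiv π.quotientEquivClasses fun q => by
      rw [Setoid.coe_quotientEquivClasses, Fin.ext_iff]; rfl).trans
    (Equiv.subtypeSubtypeEquivSubtypeInter (· ∈ π.classes) fun C => C.ncard = i)

/-- The top block `A` is joined to the bottom block `σ⁻¹ A`, which makes `σ ↦ blockDiagram σ`
multiplicative for `ubpMul`. -/
def blockDiagram (σ : Perm (Quotient π)) : Setoid (Fin k ⊕ Fin k) :=
  Setoid.ker (Sum.elim (Quotient.mk π) (σ ∘ Quotient.mk π))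

lemma topPart_blockDiagram (σ : Perm (Quotient π)) : topPart (blockDiagram σ) = π :=
  Setoid.ext fun _ _ => Quotient.eq

lemma botPart_blockDiagram (σ : Perm (Quotient π)) : botPart (blockDiagram σ) = π :=
  Setoid.ext fun _ _ => σ.injective.eq_iff.trans Quotient.eq

lemma isUniform_blockDiagram_iff (σ : Perm (Quotient π)) :
    IsUniform k (blockDiagram σ) ↔ σ ∈ fiberwise (blockSize π) := by
  set label := Sum.elim (Quotient.mk π) (σ ∘ Quotient.mk π)
  have hlabel : Surjective label := fun q => ⟨.inl q.out, Quotient.out_eq q⟩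
  have hblock (x : Fin k ⊕ Fin k) :
      {a | ⟦a⟧ = label x}.ncard = {b | σ ⟦b⟧ = label x}.ncard ↔
        blockSize π (σ⁻¹ (label x)) = blockSize π (label x) := by
    have hbot : {b | σ ⟦b⟧ = label x} = {b | ⟦b⟧ = σ⁻¹ (label x)} :=
      Set.ext fun _ => σ.eq_symm_apply.symm
    rw [hbot, Fin.ext_iff, eq_comm]
    rfl
  rw [← inv_mem_iff, mem_fiberwise, hlabel.forall]
  exact forall_congr' hblock

lemma ubpMul_blockDiagram (σ τ : Perm (Quotient π)) :
    ubpMul (blockDiagram σ) (blockDiagram τ) = blockDiagram (σ * τ) := by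
  let Γ : Fin k ⊕ (Fin k ⊕ Fin k) → Quotient π :=
    Sum.elim (Quotient.mk π) (Sum.elim (σ ∘ Quotient.mk π) (⇑(σ * τ) ∘ Quotient.mk π))
  have h12 : Γ ∘ row12 k = Sum.elim (Quotient.mk π) (σ ∘ Quotient.mk π) := by
    ext (_ | _) <;> rfl
  have h23 : Γ ∘ row23 k = σ ∘ Sum.elim (Quotient.mk π) (τ ∘ Quotient.mk π) := by
    ext (_ | _) <;> rfl
  have h13 : Γ ∘ row13 k = Sum.elim (Quotient.mk π) (⇑(σ * τ) ∘ Quotient.mk π) := by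
    ext (_ | _) <;> rfl
  have := ubpMul_ker Γ fun x => ⟨(σ⁻¹ (Γ x)).out, by simp [Γ]⟩
  rw [h12, h23, h13, Setoid.ker_comp_of_injective σ.injective] at this
  exact this

lemma blockDiagram_injective : Injective (blockDiagram (π := π)) := by
  intro σ τ h
  ext q
  obtain ⟨j, rfl⟩ := Quotient.mk_surjective q
  obtain ⟨i, hi⟩ := Quotient.mk_surjective (σ ⟦j⟧)
  have hτ : (blockDiagram τ).r (.inl i) (.inr j) := h ▸ hi
  exact hi.symm.trans hτ

lemma exists_blockDiagram_eq {d : Setoid (Fin k ⊕ Fin k)} (hU : IsUniform k d)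
    (hT : topPart d = π) (hB : botPart d = π) : ∃ σ : Perm (Quotient π), blockDiagram σ = d := by
  obtain ⟨eT, heT⟩ :=
    Setoid.exists_equiv_of_ker_eq hU.surjective_mk_inl (Setoid.comap_eq.symm.trans hT)
  obtain ⟨eB, heB⟩ :=
    Setoid.exists_equiv_of_ker_eq hU.surjective_mk_inr (Setoid.comap_eq.symm.trans hB)
  refine ⟨eB.trans eT.symm, ?_⟩
  calc blockDiagram _
      = Setoid.ker (eT ∘ Sum.elim (Quotient.mk π) ((eB.trans eT.symm) ∘ Quotient.mk π)) :=
        (Setoid.ker_comp_of_injective eT.injective _).symm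
    _ = Setoid.ker (Quotient.mk d) := by
        congr 1
        ext (i | j) <;> simp [heT, heB]
    _ = d := Setoid.ker_mk_eq d

variable (π) in
noncomputable def blockDiagramEquiv :
    fiberwise (blockSize π) ≃
      {d : Setoid (Fin k ⊕ Fin k) // IsUniform k d ∧ topPart d = π ∧ botPart d = π} :=
  Equiv.ofBijective
    (fun σ => ⟨blockDiagram σ.1, (isUniform_blockDiagram_iff σ.1).mpr σ.2,
      topPart_blockDiagram σ.1, botPart_blockDiagram σ.1⟩)
    ⟨fun _ _ h => Subtype.ext (blockDiagram_injective (congrArg Subtype.val h)), by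
      rintro ⟨d, hU, hT, hB⟩
      obtain ⟨σ, rfl⟩ := exists_blockDiagram_eq hU hT hB
      exact ⟨⟨σ, (isUniform_blockDiagram_iff σ).mp hU⟩, rfl⟩⟩

end Diagrams

/-- If `π` has type `(1^{a_1} 2^{a_2} … k^{a_k})`, the maximal
subgroup of `U_k` at `e_π` is isomorphic (as a group, expressed here by a bijection
preserving the diagram product) to `S_{a_1} × ⋯ × S_{a_k}`. -/
theorem maxSubgroup_iso_prod_symm (k : ℕ) (π : Setoid (Fin k)) :
    ∃ f : {d : Setoid (Fin k ⊕ Fin k) // IsUniform k d ∧ topPart d = π ∧ botPart d = π} →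
        ∀ i : Fin (k + 1),
          Equiv.Perm (Fin (Set.ncard {C ∈ π.classes | C.ncard = (i : ℕ)})),
      Function.Bijective f ∧
      ∀ (x y : {d : Setoid (Fin k ⊕ Fin k) //
            IsUniform k d ∧ topPart d = π ∧ botPart d = π})
        (h : IsUniform k (ubpMul x.1 y.1) ∧ topPart (ubpMul x.1 y.1) = π ∧
          botPart (ubpMul x.1 y.1) = π),
        f ⟨ubpMul x.1 y.1, h⟩ = f x * f y := by
  let e := blockDiagramEquiv π
  let Ψ := (Equiv.Perm.fiberwiseEquivPi (blockSize π)).trans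
    (MulEquiv.piCongrRight fun i => (blockSizeFiberEquiv π i).permCongrHom)
  refine ⟨Ψ ∘ e.symm, Ψ.bijective.comp e.symm.bijective, ?_⟩
  intro x y h
  obtain ⟨σ, rfl⟩ := e.surjective x
  obtain ⟨τ, rfl⟩ := e.surjective y
  have hmul : e.symm ⟨ubpMul (e σ).1 (e τ).1, h⟩ = σ * τ :=
    e.symm_apply_eq.mpr (Subtype.ext (ubpMul_blockDiagram σ.1 τ.1))
  simp only [comp_apply, hmul, Equiv.symm_apply_apply, map_mul]
end

section
/- Two uniform block permutations d, d' ∈ U_k generate the same two-sided ideal (i.e., U_k d U_k = U_k d' U_k) if and only if top(d) and top(d') are set partitions of the same type. Consequently, the J-classes of U_k are in bijection with integer partitions of k. -/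
open Sum

/-- The principal two-sided ideal `U_k d U_k` generated by `d`. -/
def twoIdeal (k : ℕ) (d : Setoid (Fin k ⊕ Fin k)) : Set (Setoid (Fin k ⊕ Fin k)) :=
  {x | ∃ a b, IsUniform k a ∧ IsUniform k b ∧ x = ubpMul (ubpMul a d) b}

/-!
A uniform diagram is an idempotent `e_π` twisted by a permutation: matching the top and bottom
halves of each block gives `σ` with `d = {(i, j̄) | top(d) i (σ j)}`. For diagrams in this normal
form the stacked product is read off directly: `a d` is `bot(a) ⊔ top(d)` pulled back along two
permutations, so `top(a d)` is a relabelling of `bot(a) ⊔ top(d)`. Hence `x ∈ U_k d U_k` iff `x`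
is uniform and some relabelling of `top(d)` refines `top(x)`. If relabellings of `top(d)` and
`top(d')` refine each other, they have equally many blocks and so coincide; thus equal ideals
force equal types, and conversely. Finally `e_π` realises every type, so the type map from `U_k`
onto the partitions of `k` is surjective.
-/

theorem exists_equiv_comp_eq_of_ncard_preimage_eq {α β γ : Type*} [Finite α] [Finite β]
    {f : α → γ} {g : β → γ} (h : ∀ c, (f ⁻¹' {c}).ncard = (g ⁻¹' {c}).ncard) :
    ∃ e : α ≃ β, f = g ∘ e := by
  have E : ∀ c, {a // f a = c} ≃ {b // g b = c} := fun c => (Finite.card_eq.mp (h c)).some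
  exact ⟨Equiv.ofFiberEquiv E, funext fun a => (Equiv.ofFiberEquiv_map E a).symm⟩

theorem ncard_preimage_singleton_eq_count {α β : Type*} [Fintype α] [DecidableEq β]
    (f : α → β) (b : β) : (f ⁻¹' {b}).ncard = (Finset.univ.val.map f).count b := by
  rw [Multiset.count_map]
  change _ = (Finset.univ.filter fun a => b = f a).card
  rw [← Set.ncard_coe_finset]
  congr 1
  ext
  simp [eq_comm]

namespace Setoid

variable {α β : Type*}

/-- The *type* of the set partition `s`. -/
noncomputable def blockSizes [Finite α] (s : Setoid α) : Multiset ℕ :=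
  s.classes.toFinite.toFinset.val.map Set.ncard

theorem count_blockSizes [Finite α] (s : Setoid α) (n : ℕ) :
    s.blockSizes.count n = {C ∈ s.classes | C.ncard = n}.ncard := by
  classical
  rw [blockSizes, Multiset.count_map]
  change (s.classes.toFinite.toFinset.filter fun C => n = C.ncard).card = _
  rw [← Set.ncard_coe_finset]
  congr 1
  ext
  simp [eq_comm]

theorem pos_of_mem_blockSizes [Finite α] (s : Setoid α) {n : ℕ} (hn : n ∈ s.blockSizes) :
    0 < n := by
  obtain ⟨C, hC, rfl⟩ := Multiset.mem_map.mp hn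
  obtain ⟨y, rfl⟩ := (Set.Finite.mem_toFinset _).mp hC
  exact (Set.ncard_pos (Set.toFinite _)).mpr ⟨y, s.refl' y⟩

theorem blockSizes_ker [Finite α] [Fintype β] {f : α → β} (hf : Function.Surjective f) :
    (ker f).blockSizes = Finset.univ.val.map fun b => (f ⁻¹' {b}).ncard := by
  classical
  have hcl : (ker f).classes.toFinite.toFinset = Finset.univ.image fun b => f ⁻¹' {b} := by
    ext C
    simp only [Set.Finite.mem_toFinset, Finset.mem_image, Finset.mem_univ, true_and]
    constructor
    · rintro ⟨x, rfl⟩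
      exact ⟨f x, by ext; simp [ker_def]⟩
    · rintro ⟨b, rfl⟩
      obtain ⟨x, rfl⟩ := hf b
      exact ⟨x, by ext; simp [ker_def]⟩
  have hinj : Function.Injective fun b => f ⁻¹' {b} := fun b b' hbb' => by
    obtain ⟨x, rfl⟩ := hf b
    exact (congrArg (x ∈ ·) hbb').mp rfl
  rw [blockSizes, hcl, Finset.image_val_of_injOn hinj.injOn, Multiset.map_map]
  rfl

theorem blockSizes_eq_map_ncard_fiber [Finite α] (s : Setoid α) [Fintype (Quotient s)] :
    s.blockSizes = Finset.univ.val.map fun q => (Quotient.mk s ⁻¹' {q}).ncard := by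
  conv_lhs => rw [← ker_mk_eq s]
  exact blockSizes_ker Quotient.mk''_surjective

theorem sum_blockSizes [Finite α] (s : Setoid α) : s.blockSizes.sum = Nat.card α := by
  have := Fintype.ofFinite (Quotient s)
  rw [blockSizes_eq_map_ncard_fiber]
  exact (Nat.card_sigma).symm.trans (Nat.card_congr (Equiv.sigmaFiberEquiv (Quotient.mk s)))

theorem blockSizes_comap_equiv [Finite α] [Finite β] (e : α ≃ β) (s : Setoid β) :
    (comap e s).blockSizes = s.blockSizes := by
  have := Fintype.ofFinite (Quotient s)
  rw [comap_eq, blockSizes_ker (Quotient.mk''_surjective.comp e.surjective),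
    blockSizes_eq_map_ncard_fiber]
  congr 1
  funext q
  rw [Set.preimage_comp, Set.ncard_preimage_of_injective_subset_range e.injective (by simp)]

theorem exists_perm_comap_eq_of_blockSizes_eq [Finite α] {s t : Setoid α}
    (h : s.blockSizes = t.blockSizes) : ∃ e : Equiv.Perm α, comap e s = t := by
  classical
  have := Fintype.ofFinite α
  have := Fintype.ofFinite (Quotient s)
  have := Fintype.ofFinite (Quotient t)
  rw [blockSizes_eq_map_ncard_fiber, blockSizes_eq_map_ncard_fiber] at h
  obtain ⟨γ, hγ⟩ := exists_equiv_comp_eq_of_ncard_preimage_eq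
    (f := fun q => (Quotient.mk s ⁻¹' {q}).ncard)
    (g := fun q => (Quotient.mk t ⁻¹' {q}).ncard)
    fun n => by rw [ncard_preimage_singleton_eq_count, ncard_preimage_singleton_eq_count, h]
  obtain ⟨e, he⟩ := exists_equiv_comp_eq_of_ncard_preimage_eq
    (f := Quotient.mk t) (g := γ ∘ Quotient.mk s) fun q => by
      have hfib : (γ ∘ Quotient.mk s) ⁻¹' {q} = Quotient.mk s ⁻¹' {γ.symm q} := by
        ext
        simp [Equiv.eq_symm_apply]
      rw [hfib, congrFun hγ (γ.symm q)]
      simp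
  refine ⟨e, ?_⟩
  ext x y
  rw [comap_rel, ← Quotient.eq (r := t), ← Quotient.eq (r := s), congrFun he x, congrFun he y]
  simp

theorem card_quotient_le_of_le [Finite α] {s t : Setoid α} (h : s ≤ t) :
    Nat.card (Quotient t) ≤ Nat.card (Quotient s) :=
  Nat.card_le_card_of_surjective (map_of_le h) (Quotient.ind fun x => ⟨⟦x⟧, rfl⟩)

theorem eq_of_le_of_card_quotient_le [Finite α] {s t : Setoid α} (h : s ≤ t)
    (hc : Nat.card (Quotient s) ≤ Nat.card (Quotient t)) : s = t := by
  have hsurj : Function.Surjective (map_of_le h) := Quotient.ind fun x => ⟨⟦x⟧, rfl⟩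
  have hinj := (hsurj.bijective_of_nat_card_le hc).injective
  exact le_antisymm h fun x y hxy => Quotient.exact (hinj (Quotient.sound hxy))

theorem card_quotient_comap_equiv (e : α ≃ β) (s : Setoid β) :
    Nat.card (Quotient (comap e s)) = Nat.card (Quotient s) :=
  Nat.card_congr (Quotient.congr e fun _ _ => Iff.rfl)

theorem comap_eq_of_comap_le_of_comap_le [Finite α] {s t : Setoid α} {e e' : Equiv.Perm α}
    (h : comap e s ≤ t) (h' : comap e' t ≤ s) : comap e s = t := by
  refine eq_of_le_of_card_quotient_le h ?_
  calc Nat.card (Quotient (comap e s)) = Nat.card (Quotient s) := card_quotient_comap_equiv e s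
    _ ≤ Nat.card (Quotient (comap e' t)) := card_quotient_le_of_le h'
    _ = Nat.card (Quotient t) := card_quotient_comap_equiv e' t

noncomputable def blockPartition {n : ℕ} (s : Setoid (Fin n)) : n.Partition where
  parts := s.blockSizes
  parts_pos := s.pos_of_mem_blockSizes
  parts_sum := by rw [sum_blockSizes, Nat.card_fin]

theorem blockPartition_surjective (n : ℕ) :
    Function.Surjective (blockPartition : Setoid (Fin n) → n.Partition) := by
  intro p
  obtain ⟨c, rfl⟩ := Nat.Partition.ofComposition_surj p
  have hfst : Function.Surjective (Sigma.fst : (Σ i, Fin (c.blocksFun i)) → Fin c.length) :=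
    fun i => ⟨⟨i, ⟨0, c.one_le_blocksFun i⟩⟩, rfl⟩
  refine ⟨comap c.blocksFinEquiv.symm (ker Sigma.fst), Nat.Partition.ext ?_⟩
  have hfib :
      ∀ i, (Sigma.fst ⁻¹' {i} : Set (Σ i, Fin (c.blocksFun i))).ncard = c.blocksFun i :=
    fun i => (Nat.card_congr (Equiv.sigmaSubtype i)).trans (Nat.card_fin _)
  simp only [blockPartition, blockSizes_comap_equiv, blockSizes_ker hfst, hfib, Fin.univ_val_map,
    c.ofFn_blocksFun, Nat.Partition.ofComposition_parts]

theorem comap_eq_self_of_forall_rel {s : Setoid α} {φ : α → α} (h : ∀ x, s x (φ x)) :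
    comap φ s = s :=
  Setoid.ext fun x y =>
    ⟨fun hxy => s.trans' (h x) (s.trans' hxy (s.symm' (h y))),
      fun hxy => s.trans' (s.symm' (h x)) (s.trans' hxy (h y))⟩

end Setoid

section Diagrams

variable {k : ℕ}

theorem liftSetoid_le_iff {f : Fin k ⊕ Fin k → Fin k ⊕ (Fin k ⊕ Fin k)}
    {d : Setoid (Fin k ⊕ Fin k)} {t : Setoid (Fin k ⊕ (Fin k ⊕ Fin k))} :
    liftSetoid k f d ≤ t ↔ d ≤ Setoid.comap f t :=
  ⟨fun h _ _ hab => h (Relation.EqvGen.rel _ _ ⟨_, _, hab, rfl, rfl⟩),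
    fun h => Setoid.eqvGen_le fun _ _ ⟨_, _, hab, hx, hy⟩ => hx ▸ hy ▸ h hab⟩

theorem ubpMul_comap_sumElim (σ τ : Fin k → Fin k) (π ρ : Setoid (Fin k)) :
    ubpMul (Setoid.comap (Sum.elim σ id) π) (Setoid.comap (Sum.elim id τ) ρ) =
      Setoid.comap (Sum.elim σ τ) (π ⊔ ρ) := by
  set L₁ := liftSetoid k (row12 k) (Setoid.comap (Sum.elim σ id) π)
  set L₂ := liftSetoid k (row23 k) (Setoid.comap (Sum.elim id τ) ρ)
  have hL₁ := liftSetoid_le_iff.mp (le_refl L₁)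
  have hL₂ := liftSetoid_le_iff.mp (le_refl L₂)
  let Ψ : Fin k ⊕ (Fin k ⊕ Fin k) → Fin k := Sum.elim σ (Sum.elim id τ)
  let mid : Fin k → Fin k ⊕ (Fin k ⊕ Fin k) := fun i => inr (inl i)
  -- Every vertex `z` of the stacked diagram is joined to the middle vertex `Ψ z`, and two middle
  -- vertices are joined exactly when they are related by `π ⊔ ρ`.
  have hle : L₁ ⊔ L₂ ≤ Setoid.comap Ψ (π ⊔ ρ) := by
    refine sup_le (liftSetoid_le_iff.mpr ?_) (liftSetoid_le_iff.mpr ?_)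
    · rintro (a | a) (b | b) h <;> exact (le_sup_left : π ≤ π ⊔ ρ) h
    · rintro (a | a) (b | b) h <;> exact (le_sup_right : ρ ≤ π ⊔ ρ) h
  have hmid : π ⊔ ρ ≤ Setoid.comap mid (L₁ ⊔ L₂) :=
    sup_le (fun i j h => (le_sup_left : L₁ ≤ L₁ ⊔ L₂) (hL₁ (x := inr i) (y := inr j) h))
      (fun i j h => (le_sup_right : L₂ ≤ L₁ ⊔ L₂) (hL₂ (x := inl i) (y := inl j) h))
  have hΨ : ∀ z, (L₁ ⊔ L₂) z (mid (Ψ z)) := by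
    rintro (a | a | a)
    · exact (le_sup_left : L₁ ≤ L₁ ⊔ L₂) (hL₁ (x := inl a) (y := inr (σ a)) (π.refl' _))
    · exact Setoid.refl' _ _
    · exact (le_sup_right : L₂ ≤ L₁ ⊔ L₂) (hL₂ (x := inr a) (y := inl (τ a)) (ρ.refl' _))
  have hJ : L₁ ⊔ L₂ = Setoid.comap Ψ (π ⊔ ρ) :=
    le_antisymm hle fun x y h =>
      Setoid.trans' _ (hΨ x) (Setoid.trans' _ (hmid h) (Setoid.symm' _ (hΨ y)))
  rw [ubpMul, hJ]
  ext (a | a) (b | b) <;> rfl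

theorem isUniform_comap_sumElim (σ τ : Equiv.Perm (Fin k)) (π : Setoid (Fin k)) :
    IsUniform k (Setoid.comap (Sum.elim σ τ) π) := fun x => by
  have h : ∀ e : Equiv.Perm (Fin k),
      {a | π (e a) (Sum.elim σ τ x)}.ncard = {b | π b (Sum.elim σ τ x)}.ncard :=
    fun e => Set.ncard_preimage_of_injective_subset_range (s := {b | π b _}) e.injective (by simp)
  exact (h σ).trans (h τ).symm

theorem IsUniform.exists_perm_forall_rel {d : Setoid (Fin k ⊕ Fin k)} (hd : IsUniform k d) :
    ∃ σ : Equiv.Perm (Fin k), ∀ j, d (inr j) (inl (σ j)) := by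
  have hfib : ∀ (u : Fin k → Fin k ⊕ Fin k) z,
      (fun i => (⟦u i⟧ : Quotient d)) ⁻¹' {⟦z⟧} = {i | d (u i) z} := by
    intro u z
    ext
    simp [Quotient.eq]
  obtain ⟨σ, hσ⟩ := exists_equiv_comp_eq_of_ncard_preimage_eq
    (f := fun j => (⟦inr j⟧ : Quotient d)) (g := fun i => ⟦inl i⟧) <|
      Quotient.ind fun z => by
        rw [hfib, hfib]
        exact (hd z).symm
  exact ⟨σ, fun j => Quotient.exact (congrFun hσ j)⟩

theorem IsUniform.exists_perm_comap_topPart_eq {d : Setoid (Fin k ⊕ Fin k)} (hd : IsUniform k d) :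
    ∃ σ : Equiv.Perm (Fin k), Setoid.comap (Sum.elim id σ) (topPart d) = d := by
  obtain ⟨σ, hσ⟩ := hd.exists_perm_forall_rel
  exact ⟨σ, Setoid.comap_eq_self_of_forall_rel (φ := inl ∘ Sum.elim id σ) <| by
    rintro (i | j)
    exacts [d.refl' _, hσ j]⟩

theorem IsUniform.exists_perm_comap_botPart_eq {d : Setoid (Fin k ⊕ Fin k)} (hd : IsUniform k d) :
    ∃ σ : Equiv.Perm (Fin k), Setoid.comap (Sum.elim σ id) (botPart d) = d := by
  obtain ⟨σ, hσ⟩ := hd.exists_perm_forall_rel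
  refine ⟨σ.symm, Setoid.comap_eq_self_of_forall_rel (φ := inr ∘ Sum.elim σ.symm id) ?_⟩
  rintro (i | j)
  exacts [d.symm' (by simpa using hσ (σ.symm i)), d.refl' _]

theorem IsUniform.exists_perm_botPart_eq {d : Setoid (Fin k ⊕ Fin k)} (hd : IsUniform k d) :
    ∃ σ : Equiv.Perm (Fin k), botPart d = Setoid.comap σ (topPart d) := by
  obtain ⟨σ, hσ⟩ := hd.exists_perm_comap_topPart_eq
  refine ⟨σ, ?_⟩
  conv_lhs => rw [← hσ]
  rfl

theorem IsUniform.exists_perm_ubpMul_eq {a d : Setoid (Fin k ⊕ Fin k)} (ha : IsUniform k a)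
    (hd : IsUniform k d) : ∃ σ τ : Equiv.Perm (Fin k),
      ubpMul a d = Setoid.comap (Sum.elim σ τ) (botPart a ⊔ topPart d) := by
  obtain ⟨σ, hσ⟩ := ha.exists_perm_comap_botPart_eq
  obtain ⟨τ, hτ⟩ := hd.exists_perm_comap_topPart_eq
  refine ⟨σ, τ, ?_⟩
  conv_lhs => rw [← hσ, ← hτ]
  exact ubpMul_comap_sumElim σ τ _ _

theorem isUniform_ubpMul {a d : Setoid (Fin k ⊕ Fin k)} (ha : IsUniform k a)
    (hd : IsUniform k d) : IsUniform k (ubpMul a d) := by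
  obtain ⟨σ, τ, h⟩ := ha.exists_perm_ubpMul_eq hd
  exact h ▸ isUniform_comap_sumElim σ τ _

theorem IsUniform.exists_perm_comap_topPart_le_ubpMul_right {a d : Setoid (Fin k ⊕ Fin k)}
    (ha : IsUniform k a) (hd : IsUniform k d) :
    ∃ e : Equiv.Perm (Fin k), Setoid.comap e (topPart d) ≤ topPart (ubpMul a d) := by
  obtain ⟨σ, τ, h⟩ := ha.exists_perm_ubpMul_eq hd
  exact ⟨σ, fun i j hij => h ▸ (le_sup_right : topPart d ≤ botPart a ⊔ topPart d) hij⟩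

theorem IsUniform.exists_perm_comap_topPart_le_ubpMul_left {d b : Setoid (Fin k ⊕ Fin k)}
    (hd : IsUniform k d) (hb : IsUniform k b) :
    ∃ e : Equiv.Perm (Fin k), Setoid.comap e (topPart d) ≤ topPart (ubpMul d b) := by
  obtain ⟨ρ, hρ⟩ := hd.exists_perm_botPart_eq
  obtain ⟨σ, τ, h⟩ := hd.exists_perm_ubpMul_eq hb
  refine ⟨σ.trans ρ, fun i j hij => h ▸ ?_⟩
  exact (le_sup_left : botPart d ≤ botPart d ⊔ topPart b) (hρ ▸ hij)

theorem mem_twoIdeal_iff {d x : Setoid (Fin k ⊕ Fin k)} (hd : IsUniform k d) :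
    x ∈ twoIdeal k d ↔
      IsUniform k x ∧ ∃ e : Equiv.Perm (Fin k), Setoid.comap e (topPart d) ≤ topPart x := by
  constructor
  · rintro ⟨a, b, ha, hb, rfl⟩
    have had := isUniform_ubpMul ha hd
    obtain ⟨e₁, he₁⟩ := ha.exists_perm_comap_topPart_le_ubpMul_right hd
    obtain ⟨e₂, he₂⟩ := had.exists_perm_comap_topPart_le_ubpMul_left hb
    exact ⟨isUniform_ubpMul had hb, e₂.trans e₁, fun i j h => he₂ (he₁ h)⟩
  · rintro ⟨hx, e, he⟩
    obtain ⟨τ, hτ⟩ := hd.exists_perm_comap_topPart_eq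
    obtain ⟨ρ, hρ⟩ := hx.exists_perm_comap_topPart_eq
    set N := topPart x
    have hle : topPart d ≤ Setoid.comap e.symm N := fun i j h =>
      he (show topPart d (e (e.symm i)) (e (e.symm j)) by simpa using h)
    -- `a` glues `top(d)` into a relabelled copy of `top(x)`; `b` then corrects the bottom row.
    set μ : Equiv.Perm (Fin k) := τ.trans e.symm
    have had : ubpMul (Setoid.comap (Sum.elim e id) (Setoid.comap e.symm N)) d =
        Setoid.comap (Sum.elim μ.symm id) (Setoid.comap μ N) := by
      conv_lhs => rw [← hτ]
      rw [ubpMul_comap_sumElim, sup_eq_left.mpr hle]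
      ext (i | i) (j | j) <;> simp [Setoid.comap_rel, μ]
    refine ⟨Setoid.comap (Sum.elim e id) (Setoid.comap e.symm N),
      Setoid.comap (Sum.elim id (ρ.trans μ.symm)) (Setoid.comap μ N),
      isUniform_comap_sumElim e 1 _, isUniform_comap_sumElim 1 _ _, ?_⟩
    rw [had, ubpMul_comap_sumElim, sup_idem]
    conv_lhs => rw [← hρ]
    ext (i | i) (j | j) <;> simp [Setoid.comap_rel, μ]

theorem self_mem_twoIdeal {d : Setoid (Fin k ⊕ Fin k)} (hd : IsUniform k d) :
    d ∈ twoIdeal k d :=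
  (mem_twoIdeal_iff hd).mpr ⟨hd, 1, le_rfl⟩

theorem twoIdeal_subset_of_comap_topPart_eq {d d' : Setoid (Fin k ⊕ Fin k)}
    (hd : IsUniform k d) (hd' : IsUniform k d') {ρ : Equiv.Perm (Fin k)}
    (h : Setoid.comap ρ (topPart d) = topPart d') : twoIdeal k d' ⊆ twoIdeal k d := by
  intro x hx
  obtain ⟨hx, e, he⟩ := (mem_twoIdeal_iff hd').mp hx
  rw [← h] at he
  exact (mem_twoIdeal_iff hd).mpr ⟨hx, e.trans ρ, he⟩

theorem twoIdeal_eq_iff {d d' : Setoid (Fin k ⊕ Fin k)} (hd : IsUniform k d)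
    (hd' : IsUniform k d') :
    twoIdeal k d = twoIdeal k d' ↔ (topPart d).blockSizes = (topPart d').blockSizes := by
  constructor
  · intro h
    obtain ⟨-, e, he⟩ := (mem_twoIdeal_iff hd).mp (h ▸ self_mem_twoIdeal hd')
    obtain ⟨-, e', he'⟩ := (mem_twoIdeal_iff hd').mp (h ▸ self_mem_twoIdeal hd)
    rw [← Setoid.comap_eq_of_comap_le_of_comap_le he he', Setoid.blockSizes_comap_equiv]
  · intro h
    obtain ⟨ρ, hρ⟩ := Setoid.exists_perm_comap_eq_of_blockSizes_eq h
    obtain ⟨ρ', hρ'⟩ := Setoid.exists_perm_comap_eq_of_blockSizes_eq h.symm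
    exact (twoIdeal_subset_of_comap_topPart_eq hd' hd hρ').antisymm
      (twoIdeal_subset_of_comap_topPart_eq hd hd' hρ)

end Diagrams

/-- `d, d'` generate the same two-sided ideal iff `top(d)` and
`top(d')` have the same type; consequently the `J`-classes of `U_k` are in
bijection with the integer partitions of `k`. -/
theorem ubp_J_classes (k : ℕ) :
    (∀ d d' : Setoid (Fin k ⊕ Fin k), IsUniform k d → IsUniform k d' →
      (twoIdeal k d = twoIdeal k d' ↔
        ∀ n : ℕ, {C ∈ (topPart d).classes | C.ncard = n}.ncard =
          {C ∈ (topPart d').classes | C.ncard = n}.ncard)) ∧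
    Nonempty (Quotient (Setoid.ker
        (fun d : {d : Setoid (Fin k ⊕ Fin k) // IsUniform k d} => twoIdeal k d.1)) ≃
      Nat.Partition k) := by
  constructor
  · intro d d' hd hd'
    rw [twoIdeal_eq_iff hd hd', Multiset.ext]
    simp only [Setoid.count_blockSizes]
  · let Φ : {d // IsUniform k d} → k.Partition := fun d => (topPart d.1).blockPartition
    have hΦ : Function.Surjective Φ := fun p => by
      obtain ⟨s, rfl⟩ := Setoid.blockPartition_surjective k p
      exact ⟨⟨ePart s, isUniform_comap_sumElim 1 1 s⟩, rfl⟩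
    refine ⟨(Quotient.congrRight fun d d' => ?_).trans
      (Setoid.quotientKerEquivOfSurjective Φ hΦ)⟩
    rw [Setoid.ker_def, Setoid.ker_def, twoIdeal_eq_iff d.2 d'.2]
    exact ⟨fun h => Nat.Partition.ext h, congrArg Nat.Partition.parts⟩
end

section
/- For a set partition π of [k], the maximal subgroup G_{e_π} acts freely on the right on the L-class L_π = {d ∈ U_k : bot(d) = π}, and two elements d₁, d₂ ∈ L_π are in the same orbit if and only if top(d₁) = top(d₂). Hence the orbits are in bijection with set partitions γ of [k] of the same type as π. -/
open Sum

namespace UBP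
variable {k : ℕ}

lemma topPart_r (d : Setoid (Fin k ⊕ Fin k)) (i j : Fin k) :
    (topPart d).r i j ↔ d.r (inl i) (inl j) := Iff.rfl

lemma botPart_r (d : Setoid (Fin k ⊕ Fin k)) (i j : Fin k) :
    (botPart d).r i j ↔ d.r (inr i) (inr j) := Iff.rfl

lemma exists_top (d : Setoid (Fin k ⊕ Fin k)) (hd : IsUniform k d) (x : Fin k ⊕ Fin k) :
    ∃ a, d.r (inl a) x := by
  have h := hd x
  have hA : ({a : Fin k | d.r (.inl a) x}).Nonempty := by
    cases x with
    | inl i => exact ⟨i, d.refl' (inl i)⟩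
    | inr j =>
      have hB : (0:ℕ) < {b : Fin k | d.r (.inr b) (inr j)}.ncard :=
        (Set.ncard_pos (Set.toFinite _)).mpr ⟨j, d.refl' (inr j)⟩
      exact (Set.ncard_pos (Set.toFinite _)).mp (h ▸ hB)
  exact hA

lemma exists_bot (d : Setoid (Fin k ⊕ Fin k)) (hd : IsUniform k d) (x : Fin k ⊕ Fin k) :
    ∃ b, d.r (inr b) x := by
  have h := hd x
  have hA : ({b : Fin k | d.r (.inr b) x}).Nonempty := by
    cases x with
    | inr j => exact ⟨j, d.refl' (inr j)⟩
    | inl i =>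
      have hB : (0:ℕ) < {a : Fin k | d.r (.inl a) (inl i)}.ncard :=
        (Set.ncard_pos (Set.toFinite _)).mpr ⟨i, d.refl' (inl i)⟩
      exact (Set.ncard_pos (Set.toFinite _)).mp (h ▸ hB)
  exact hA


/-- The set of middle-row elements linked to a three-row vertex. -/
def link (ℓ g : Setoid (Fin k ⊕ Fin k)) : Fin k ⊕ (Fin k ⊕ Fin k) → Set (Fin k)
  | .inl i => {m | ℓ.r (.inl i) (.inr m)}
  | .inr (.inl m') => {m | ℓ.r (.inr m') (.inr m)}
  | .inr (.inr j) => {m | g.r (.inl m) (.inr j)}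

section Mul
variable (ℓ g : Setoid (Fin k ⊕ Fin k)) (hℓ : IsUniform k ℓ) (hg : IsUniform k g)
  (hpe : botPart ℓ = topPart g)

include hpe in
lemma pe_iff (m m' : Fin k) : ℓ.r (inr m) (inr m') ↔ g.r (inl m) (inl m') := by
  have := Setoid.ext_iff.mp hpe m m'
  exact this

include hℓ hg in
lemma link_nonempty (x : Fin k ⊕ (Fin k ⊕ Fin k)) : (link ℓ g x).Nonempty := by
  rcases x with i | m' | j
  · obtain ⟨b, hb⟩ := exists_bot ℓ hℓ (inl i)
    exact ⟨b, ℓ.symm' hb⟩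
  · exact ⟨m', ℓ.refl' (inr m')⟩
  · obtain ⟨a, ha⟩ := exists_top g hg (inr j)
    exact ⟨a, ha⟩

include hpe in
lemma link_mono {x : Fin k ⊕ (Fin k ⊕ Fin k)} {m m' : Fin k}
    (hm : m ∈ link ℓ g x) (hmm : ℓ.r (inr m) (inr m')) : m' ∈ link ℓ g x := by
  rcases x with i | n | j
  · exact ℓ.trans' hm hmm
  · exact ℓ.trans' hm hmm
  · exact g.trans' (g.symm' ((pe_iff ℓ g hpe m m').mp hmm)) hm

include hpe in
lemma link_rel {x : Fin k ⊕ (Fin k ⊕ Fin k)} {m m' : Fin k}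
    (hm : m ∈ link ℓ g x) (hm' : m' ∈ link ℓ g x) : ℓ.r (inr m) (inr m') := by
  rcases x with i | n | j
  · exact ℓ.trans' (ℓ.symm' hm) hm'
  · exact ℓ.trans' (ℓ.symm' hm) hm'
  · exact (pe_iff ℓ g hpe m m').mpr (g.trans' hm (g.symm' hm'))

include hℓ hg hpe in
lemma link_eq_iff (x y : Fin k ⊕ (Fin k ⊕ Fin k)) :
    link ℓ g x = link ℓ g y ↔ ∃ m, m ∈ link ℓ g x ∧ m ∈ link ℓ g y := by
  constructor
  · intro h
    obtain ⟨m, hm⟩ := link_nonempty ℓ g hℓ hg x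
    exact ⟨m, hm, h ▸ hm⟩
  · rintro ⟨m, hx, hy⟩
    ext m'
    constructor
    · intro h
      exact link_mono ℓ g hpe hy (link_rel ℓ g hpe hx h)
    · intro h
      exact link_mono ℓ g hpe hx (link_rel ℓ g hpe hy h)

include hℓ hg hpe in
lemma join_eq_ker :
    (liftSetoid k (row12 k) ℓ ⊔ liftSetoid k (row23 k) g) = Setoid.ker (link ℓ g) := by
  apply le_antisymm
  · apply sup_le
    · apply Setoid.eqvGen_le
      rintro x y ⟨a, b, hab, rfl, rfl⟩
      show link ℓ g _ = link ℓ g _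
      rw [link_eq_iff ℓ g hℓ hg hpe]
      rcases a with i | m <;> rcases b with i' | m'
      · obtain ⟨m, hm⟩ := link_nonempty ℓ g hℓ hg (inl i)
        exact ⟨m, hm, ℓ.trans' (ℓ.symm' hab) hm⟩
      · exact ⟨m', hab, ℓ.refl' (inr m')⟩
      · exact ⟨m, ℓ.refl' (inr m), ℓ.symm' hab⟩
      · exact ⟨m', ℓ.trans' hab (ℓ.refl' (inr m')), ℓ.refl' (inr m')⟩
    · apply Setoid.eqvGen_le
      rintro x y ⟨a, b, hab, rfl, rfl⟩
      show link ℓ g _ = link ℓ g _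
      rw [link_eq_iff ℓ g hℓ hg hpe]
      rcases a with m | j <;> rcases b with m' | j'
      · exact ⟨m, ℓ.refl' (inr m), (pe_iff ℓ g hpe m' m).mpr (g.symm' hab)⟩
      · exact ⟨m, ℓ.refl' (inr m), hab⟩
      · exact ⟨m', g.symm' hab, ℓ.refl' (inr m')⟩
      · obtain ⟨m, hm⟩ := link_nonempty ℓ g hℓ hg (inr (inr j))
        exact ⟨m, hm, g.trans' hm hab⟩
  · intro x y h
    have h' : link ℓ g x = link ℓ g y := h
    obtain ⟨m, hx, hy⟩ := (link_eq_iff ℓ g hℓ hg hpe x y).mp h'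
    have key : ∀ z : Fin k ⊕ (Fin k ⊕ Fin k), ∀ n : Fin k, n ∈ link ℓ g z →
        (liftSetoid k (row12 k) ℓ ⊔ liftSetoid k (row23 k) g).r z (inr (inl n)) := by
      intro z n hn
      rcases z with i | m' | j
      · exact le_sup_left (α := Setoid _) (Relation.EqvGen.rel _ _ ⟨inl i, inr n, hn, rfl, rfl⟩)
      · exact le_sup_left (α := Setoid _) (Relation.EqvGen.rel _ _ ⟨inr m', inr n, hn, rfl, rfl⟩)
      · exact (liftSetoid k (row12 k) ℓ ⊔ liftSetoid k (row23 k) g).symm'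
          (le_sup_right (α := Setoid _) (Relation.EqvGen.rel _ _ ⟨inl n, inr j, hn, rfl, rfl⟩))
    exact Setoid.trans' _ (key x m hx) (Setoid.symm' _ (key y m hy))


include hℓ hg hpe in
lemma mul_rel (x y : Fin k ⊕ Fin k) :
    (ubpMul ℓ g).r x y ↔ link ℓ g (row13 k x) = link ℓ g (row13 k y) := by
  show (Setoid.comap (row13 k) _).r x y ↔ _
  rw [join_eq_ker ℓ g hℓ hg hpe]
  exact Iff.rfl

include hℓ hg hpe in
lemma mul_inl_inl (i j : Fin k) :
    (ubpMul ℓ g).r (inl i) (inl j) ↔ ℓ.r (inl i) (inl j) := by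
  rw [mul_rel ℓ g hℓ hg hpe, link_eq_iff ℓ g hℓ hg hpe]
  show (∃ m, ℓ.r (inl i) (inr m) ∧ ℓ.r (inl j) (inr m)) ↔ _
  constructor
  · rintro ⟨m, h1, h2⟩
    exact ℓ.trans' h1 (ℓ.symm' h2)
  · intro h
    obtain ⟨b, hb⟩ := exists_bot ℓ hℓ (inl i)
    exact ⟨b, ℓ.symm' hb, ℓ.trans' (ℓ.symm' h) (ℓ.symm' hb)⟩

include hℓ hg hpe in
lemma mul_inl_inr (i j : Fin k) :
    (ubpMul ℓ g).r (inl i) (inr j) ↔ ∃ m, ℓ.r (inl i) (inr m) ∧ g.r (inl m) (inr j) := by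
  rw [mul_rel ℓ g hℓ hg hpe, link_eq_iff ℓ g hℓ hg hpe]
  exact Iff.rfl

include hℓ hg hpe in
lemma mul_inr_inr (i j : Fin k) :
    (ubpMul ℓ g).r (inr i) (inr j) ↔ g.r (inr i) (inr j) := by
  rw [mul_rel ℓ g hℓ hg hpe, link_eq_iff ℓ g hℓ hg hpe]
  show (∃ m, g.r (inl m) (inr i) ∧ g.r (inl m) (inr j)) ↔ _
  constructor
  · rintro ⟨m, h1, h2⟩
    exact g.trans' (g.symm' h1) h2
  · intro h
    obtain ⟨a, ha⟩ := exists_top g hg (inr i)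
    exact ⟨a, ha, g.trans' ha h⟩

include hℓ hg hpe in
lemma mul_top : topPart (ubpMul ℓ g) = topPart ℓ :=
  Setoid.ext fun i j => mul_inl_inl ℓ g hℓ hg hpe i j

include hℓ hg hpe in
lemma mul_bot : botPart (ubpMul ℓ g) = botPart g :=
  Setoid.ext fun i j => mul_inr_inr ℓ g hℓ hg hpe i j

include hℓ hg hpe in
lemma mul_uniform : IsUniform k (ubpMul ℓ g) := by
  intro x
  cases x with
  | inl i =>
    obtain ⟨m₀, hm₀⟩ : ∃ m, ℓ.r (inl i) (inr m) := by
      obtain ⟨b, hb⟩ := exists_bot ℓ hℓ (inl i); exact ⟨b, ℓ.symm' hb⟩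
    have e1 : {a : Fin k | (ubpMul ℓ g).r (.inl a) (inl i)} = {a | ℓ.r (inl a) (inl i)} := by
      ext a; exact mul_inl_inl ℓ g hℓ hg hpe a i
    have e2 : {b : Fin k | (ubpMul ℓ g).r (.inr b) (inl i)} = {b | g.r (inl m₀) (inr b)} := by
      ext b
      show (ubpMul ℓ g).r (inr b) (inl i) ↔ _
      rw [show ∀ p q, (ubpMul ℓ g).r p q ↔ (ubpMul ℓ g).r q p from
        fun p q => ⟨Setoid.symm' _, Setoid.symm' _⟩, mul_inl_inr ℓ g hℓ hg hpe]
      constructor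
      · rintro ⟨m, h1, h2⟩
        exact g.trans' ((pe_iff ℓ g hpe m₀ m).mp (ℓ.trans' (ℓ.symm' hm₀) h1)) h2
      · intro h
        exact ⟨m₀, hm₀, h⟩
    rw [e1, e2]
    have e3 : {b : Fin k | g.r (inl m₀) (inr b)} = {b | g.r (inr b) (inl m₀)} := by
      ext b; exact ⟨g.symm', g.symm'⟩
    have e4 : {a : Fin k | g.r (inl a) (inl m₀)} = {b | ℓ.r (inr b) (inl i)} := by
      ext a
      rw [Set.mem_setOf_eq, Set.mem_setOf_eq, ← pe_iff ℓ g hpe]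
      exact ⟨fun h => ℓ.trans' h (ℓ.symm' hm₀), fun h => ℓ.trans' h hm₀⟩
    rw [e3, ← hg (inl m₀), e4]
    exact hℓ (inl i)
  | inr j =>
    obtain ⟨m₀, hm₀⟩ : ∃ m, g.r (inl m) (inr j) := exists_top g hg (inr j)
    have e1 : {b : Fin k | (ubpMul ℓ g).r (.inr b) (inr j)} = {b | g.r (inr b) (inr j)} := by
      ext b; exact mul_inr_inr ℓ g hℓ hg hpe b j
    have e2 : {a : Fin k | (ubpMul ℓ g).r (.inl a) (inr j)} = {a | ℓ.r (inl a) (inr m₀)} := by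
      ext a
      rw [Set.mem_setOf_eq, mul_inl_inr ℓ g hℓ hg hpe]
      constructor
      · rintro ⟨m, h1, h2⟩
        exact ℓ.trans' h1 ((pe_iff ℓ g hpe m m₀).mpr (g.trans' h2 (g.symm' hm₀)))
      · intro h
        exact ⟨m₀, h, hm₀⟩
    rw [e1, e2]
    have e3 : {a : Fin k | g.r (inl a) (inr j)} = {a | g.r (inl a) (inl m₀)} := by
      ext a
      exact ⟨fun h => g.trans' h (g.symm' hm₀), fun h => g.trans' h hm₀⟩
    have e4 : {a : Fin k | g.r (inl a) (inl m₀)} = {a | ℓ.r (inr a) (inr m₀)} := by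
      ext a; exact (pe_iff ℓ g hpe a m₀).symm
    have := hg (inr j)
    rw [e3, e4, ← hℓ (inr m₀)] at this
    exact this

end Mul

lemma setoid_ext3 {d d' : Setoid (Fin k ⊕ Fin k)}
    (h1 : ∀ i j, d.r (inl i) (inl j) ↔ d'.r (inl i) (inl j))
    (h2 : ∀ i j, d.r (inl i) (inr j) ↔ d'.r (inl i) (inr j))
    (h3 : ∀ i j, d.r (inr i) (inr j) ↔ d'.r (inr i) (inr j)) : d = d' := by
  apply Setoid.ext
  rintro (i | i) (j | j)
  · exact h1 i j
  · exact h2 i j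
  · constructor
    · intro h
      exact d'.symm' ((h2 j i).mp (d.symm' h))
    · intro h
      exact d.symm' ((h2 j i).mpr (d'.symm' h))
  · exact h3 i j

lemma reflect_r (d : Setoid (Fin k ⊕ Fin k)) (x y : Fin k ⊕ Fin k) :
    (reflectUBP d).r x y ↔ d.r x.swap y.swap := Iff.rfl

lemma reflect_uniform {d : Setoid (Fin k ⊕ Fin k)} (hd : IsUniform k d) :
    IsUniform k (reflectUBP d) := by
  intro x
  exact (hd x.swap).symm

lemma reflect_top (d : Setoid (Fin k ⊕ Fin k)) : topPart (reflectUBP d) = botPart d :=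
  Setoid.ext fun i j => Iff.rfl

lemma reflect_bot (d : Setoid (Fin k ⊕ Fin k)) : botPart (reflectUBP d) = topPart d :=
  Setoid.ext fun i j => Iff.rfl

section Parts
variable (π : Setoid (Fin k))

/-- Freeness of the action. -/
lemma part2 (ℓ : Setoid (Fin k ⊕ Fin k)) (hℓ : IsUniform k ℓ) (hℓb : botPart ℓ = π)
    (g h : Setoid (Fin k ⊕ Fin k))
    (hg : IsUniform k g) (hgt : topPart g = π) (hgb : botPart g = π)
    (hh : IsUniform k h) (hht : topPart h = π) (hhb : botPart h = π)
    (heq : ubpMul ℓ g = ubpMul ℓ h) : g = h := by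
  have hpeg : botPart ℓ = topPart g := hℓb.trans hgt.symm
  have hpeh : botPart ℓ = topPart h := hℓb.trans hht.symm
  have key : ∀ g h : Setoid (Fin k ⊕ Fin k), IsUniform k g → topPart g = π → IsUniform k h →
      topPart h = π → ubpMul ℓ g = ubpMul ℓ h →
      ∀ m j, g.r (inl m) (inr j) → h.r (inl m) (inr j) := by
    intro g h hg hgt hh hht heq m j hmj
    have hpeg : botPart ℓ = topPart g := hℓb.trans hgt.symm
    have hpeh : botPart ℓ = topPart h := hℓb.trans hht.symm
    obtain ⟨i, hi⟩ := exists_top ℓ hℓ (inr m)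
    have : (ubpMul ℓ g).r (inl i) (inr j) :=
      (mul_inl_inr ℓ g hℓ hg hpeg i j).mpr ⟨m, hi, hmj⟩
    rw [heq] at this
    obtain ⟨m', h1, h2⟩ := (mul_inl_inr ℓ h hℓ hh hpeh i j).mp this
    have : h.r (inl m) (inl m') :=
      (pe_iff ℓ h hpeh m m').mp (ℓ.trans' (ℓ.symm' hi) h1)
    exact h.trans' this h2
  apply setoid_ext3
  · intro i j
    rw [← topPart_r, ← topPart_r, hgt, hht]
  · intro i j
    exact ⟨key g h hg hgt hh hht heq i j, key h g hh hht hg hgt heq.symm i j⟩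
  · intro i j
    rw [← botPart_r, ← botPart_r, hgb, hhb]

/-- Same orbit iff same top. -/
lemma part3 (d₁ d₂ : Setoid (Fin k ⊕ Fin k))
    (h1 : IsUniform k d₁) (h1b : botPart d₁ = π) (h2 : IsUniform k d₂) (h2b : botPart d₂ = π) :
    (∃ g, (IsUniform k g ∧ topPart g = π ∧ botPart g = π) ∧ d₂ = ubpMul d₁ g) ↔
      topPart d₁ = topPart d₂ := by
  constructor
  · rintro ⟨g, ⟨hg, hgt, hgb⟩, rfl⟩
    exact (mul_top d₁ g h1 hg (h1b.trans hgt.symm)).symm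
  · intro htop
    set G := ubpMul (reflectUBP d₁) d₂ with hG
    have hr1 : IsUniform k (reflectUBP d₁) := reflect_uniform h1
    have hpe1 : botPart (reflectUBP d₁) = topPart d₂ := (reflect_bot d₁).trans htop
    have hGu : IsUniform k G := mul_uniform _ _ hr1 h2 hpe1
    have hGt : topPart G = π := (mul_top _ _ hr1 h2 hpe1).trans ((reflect_top d₁).trans h1b)
    have hGb : botPart G = π := (mul_bot _ _ hr1 h2 hpe1).trans h2b
    refine ⟨G, ⟨hGu, hGt, hGb⟩, ?_⟩
    have hpe2 : botPart d₁ = topPart G := h1b.trans hGt.symm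
    apply setoid_ext3
    · intro i j
      rw [mul_inl_inl d₁ G h1 hGu hpe2]
      exact (Setoid.ext_iff.mp htop i j).symm
    · intro i j
      rw [mul_inl_inr d₁ G h1 hGu hpe2]
      constructor
      · intro hij
        obtain ⟨m, hm⟩ : ∃ m, d₁.r (inl i) (inr m) := by
          obtain ⟨b, hb⟩ := exists_bot d₁ h1 (inl i); exact ⟨b, d₁.symm' hb⟩
        refine ⟨m, hm, ?_⟩
        rw [mul_inl_inr _ d₂ hr1 h2 hpe1]
        exact ⟨i, d₁.symm' hm, hij⟩
      · rintro ⟨m, hm, hG2⟩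
        rw [mul_inl_inr _ d₂ hr1 h2 hpe1] at hG2
        obtain ⟨p, hp1, hp2⟩ := hG2
        have hp1' : d₁.r (inr m) (inl p) := show d₁.r _ _ from hp1
        have : d₁.r (inl i) (inl p) := d₁.trans' hm hp1'
        have : d₂.r (inl i) (inl p) := (Setoid.ext_iff.mp htop i p).mp this
        exact d₂.trans' this hp2
    · intro i j
      rw [mul_inr_inr d₁ G h1 hGu hpe2, hG, mul_inr_inr _ d₂ hr1 h2 hpe1]

end Parts

lemma class_eq_iff (γ : Setoid (Fin k)) (i j : Fin k) :
    {x | γ.r x i} = {x | γ.r x j} ↔ γ.r i j := by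
  constructor
  · intro h
    have : i ∈ {x | γ.r x j} := h ▸ (γ.refl' i)
    exact this
  · intro h
    ext x
    exact ⟨fun hx => γ.trans' hx h, fun hx => γ.trans' hx (γ.symm' h)⟩

section Forward
variable (ℓ : Setoid (Fin k ⊕ Fin k)) (hℓ : IsUniform k ℓ)

lemma bm_eq (i : Fin k) :
    blockMap ℓ {x | (topPart ℓ).r x i} = {b | ℓ.r (inl i) (inr b)} := by
  ext b
  constructor
  · rintro ⟨a, ha, hab⟩
    exact ℓ.trans' (ℓ.symm' (ha : ℓ.r (inl a) (inl i))) hab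
  · intro h
    exact ⟨i, (topPart ℓ).refl' i, h⟩

include hℓ in
lemma bm_ncard (i : Fin k) :
    (blockMap ℓ {x | (topPart ℓ).r x i}).ncard = ({x | (topPart ℓ).r x i}).ncard := by
  rw [bm_eq ℓ i]
  have e1 : {b | ℓ.r (inl i) (inr b)} = {b : Fin k | ℓ.r (inr b) (inl i)} := by
    ext b; exact ⟨ℓ.symm', ℓ.symm'⟩
  have e2 : {x | (topPart ℓ).r x i} = {a : Fin k | ℓ.r (inl a) (inl i)} := rfl
  rw [e1, e2]
  exact (hℓ (inl i)).symm

lemma bm_mem_classes (i b₀ : Fin k) (hb₀ : ℓ.r (inl i) (inr b₀)) :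
    blockMap ℓ {x | (topPart ℓ).r x i} = {x | (botPart ℓ).r x b₀} := by
  rw [bm_eq]
  ext b
  exact ⟨fun h => ℓ.trans' (ℓ.symm' h) hb₀, fun h => ℓ.trans' hb₀ (ℓ.symm' h)⟩

include hℓ in
lemma part4_forward (n : ℕ) :
    {C ∈ (topPart ℓ).classes | C.ncard = n}.ncard
      = {C ∈ (botPart ℓ).classes | C.ncard = n}.ncard := by
  have himg : blockMap ℓ '' {C ∈ (topPart ℓ).classes | C.ncard = n}
      = {C ∈ (botPart ℓ).classes | C.ncard = n} := by
    ext D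
    constructor
    · rintro ⟨C, ⟨⟨i, rfl⟩, hn⟩, rfl⟩
      obtain ⟨b₀, hb₀⟩ : ∃ b, ℓ.r (inl i) (inr b) := by
        obtain ⟨b, hb⟩ := exists_bot ℓ hℓ (inl i); exact ⟨b, ℓ.symm' hb⟩
      constructor
      · rw [bm_mem_classes ℓ i b₀ hb₀]
        exact Setoid.mem_classes _ b₀
      · rw [bm_ncard ℓ hℓ i]
        exact hn
    · rintro ⟨⟨b₀, rfl⟩, hn⟩
      obtain ⟨a, ha⟩ := exists_top ℓ hℓ (inr b₀)
      refine ⟨{x | (topPart ℓ).r x a}, ⟨Setoid.mem_classes _ a, ?_⟩, bm_mem_classes ℓ a b₀ ha⟩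
      rw [← bm_ncard ℓ hℓ a, bm_mem_classes ℓ a b₀ ha]
      exact hn
  have hinj : Set.InjOn (blockMap ℓ) {C ∈ (topPart ℓ).classes | C.ncard = n} := by
    rintro C ⟨⟨i, rfl⟩, -⟩ C' ⟨⟨i', rfl⟩, -⟩ hCC'
    obtain ⟨b₀, hb₀⟩ : ∃ b, ℓ.r (inl i) (inr b) := by
      obtain ⟨b, hb⟩ := exists_bot ℓ hℓ (inl i); exact ⟨b, ℓ.symm' hb⟩
    have hb₀' : b₀ ∈ blockMap ℓ {x | (topPart ℓ).r x i'} := by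
      rw [← hCC', bm_eq]; exact hb₀
    rw [bm_eq] at hb₀'
    have htop : (topPart ℓ).r i i' := ℓ.trans' hb₀ (ℓ.symm' hb₀')
    exact (class_eq_iff (topPart ℓ) i i').mpr htop
  rw [← himg, Set.ncard_image_of_injOn hinj]

end Forward

section Backward
variable (γ π : Setoid (Fin k))

/-- The class of `i` as an element of the subtype of classes. -/
def cls (γ : Setoid (Fin k)) (i : Fin k) : {C // C ∈ γ.classes} :=
  ⟨{x | γ.r x i}, Setoid.mem_classes γ i⟩

/-- The relation of the constructed uniform block permutation. -/
def lsRel (Φ : {C // C ∈ γ.classes} ≃ {C // C ∈ π.classes}) :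
    (Fin k ⊕ Fin k) → (Fin k ⊕ Fin k) → Prop
  | inl i, inl j => γ.r i j
  | inl i, inr j => (Φ (cls γ i)).1 = {x | π.r x j}
  | inr i, inl j => (Φ (cls γ j)).1 = {x | π.r x i}
  | inr i, inr j => π.r i j

/-- The constructed uniform block permutation with bottom `π` and top `γ`. -/
def lsSetoid (Φ : {C // C ∈ γ.classes} ≃ {C // C ∈ π.classes}) : Setoid (Fin k ⊕ Fin k) where
  r := lsRel γ π Φ
  iseqv := by
    constructor
    · rintro (i | i)
      exacts [γ.refl' i, π.refl' i]
    · rintro (i | i) (j | j) h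
      · exact γ.symm' h
      · exact h
      · exact h
      · exact π.symm' h
    · rintro (i | i) (m | m) (j | j) h1 h2
      · exact γ.trans' h1 h2
      · show (Φ (cls γ i)).1 = _
        rw [show cls γ i = cls γ m from Subtype.ext ((class_eq_iff γ i m).mpr h1)]
        exact h2
      · have : Φ (cls γ i) = Φ (cls γ j) :=
          Subtype.ext (h1.trans (h2 : (Φ (cls γ j)).1 = {x | π.r x m}).symm)
        exact (class_eq_iff γ i j).mp (congrArg Subtype.val (Φ.injective this))
      · show (Φ (cls γ i)).1 = _
        rw [h1]
        exact (class_eq_iff π m j).mpr h2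
      · show (Φ (cls γ j)).1 = _
        rw [show cls γ j = cls γ m from Subtype.ext ((class_eq_iff γ j m).mpr (γ.symm' h2))]
        exact h1
      · exact (class_eq_iff π i j).mp ((h1 : (Φ (cls γ m)).1 = _).symm.trans h2)
      · show (Φ (cls γ j)).1 = _
        rw [h2]
        exact (class_eq_iff π m i).mpr (π.symm' h1)
      · exact π.trans' h1 h2

lemma lsSetoid_top (Φ : {C // C ∈ γ.classes} ≃ {C // C ∈ π.classes}) :
    topPart (lsSetoid γ π Φ) = γ := Setoid.ext fun _ _ => Iff.rfl

lemma lsSetoid_bot (Φ : {C // C ∈ γ.classes} ≃ {C // C ∈ π.classes}) :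
    botPart (lsSetoid γ π Φ) = π := Setoid.ext fun _ _ => Iff.rfl

lemma class_set_eq (D : {C // C ∈ π.classes}) : {b | D.1 = {x | π.r x b}} = D.1 := by
  obtain ⟨b₀, hb₀⟩ := D.2
  ext b
  rw [Set.mem_setOf_eq, hb₀, class_eq_iff π b₀ b]
  exact ⟨fun h => π.symm' h, fun h => π.symm' h⟩

lemma lsSetoid_uniform (Φ : {C // C ∈ γ.classes} ≃ {C // C ∈ π.classes})
    (hΦ : ∀ x, (Φ x).1.ncard = x.1.ncard) : IsUniform k (lsSetoid γ π Φ) := by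
  intro x
  cases x with
  | inl i =>
    have eA : {a : Fin k | (lsSetoid γ π Φ).r (.inl a) (inl i)} = (cls γ i).1 := rfl
    have eB : {b : Fin k | (lsSetoid γ π Φ).r (.inr b) (inl i)} = (Φ (cls γ i)).1 :=
      class_set_eq π (Φ (cls γ i))
    rw [eA, eB, hΦ (cls γ i)]
  | inr j =>
    have eB : {b : Fin k | (lsSetoid γ π Φ).r (.inr b) (inr j)} = (cls π j).1 := rfl
    set E := Φ.symm (cls π j) with hE
    have eA : {a : Fin k | (lsSetoid γ π Φ).r (.inl a) (inr j)} = E.1 := by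
      ext a
      show (Φ (cls γ a)).1 = {x | π.r x j} ↔ a ∈ E.1
      obtain ⟨a₀, ha₀⟩ := E.2
      constructor
      · intro h
        have : Φ (cls γ a) = cls π j := Subtype.ext h
        have : cls γ a = E := by rw [hE, ← this, Φ.symm_apply_apply]
        have := congrArg Subtype.val this
        rw [ha₀] at this
        rw [ha₀]
        exact (class_eq_iff γ a a₀).mp this
      · intro h
        rw [ha₀] at h
        have : cls γ a = E := Subtype.ext (by rw [ha₀]; exact (class_eq_iff γ a a₀).mpr h)
        rw [this, hE, Φ.apply_symm_apply]
        rfl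
    rw [eA, eB, ← show Φ E = cls π j from by rw [hE, Φ.apply_symm_apply]]
    exact (hΦ E).symm

variable {γ π} in
lemma part4_backward
    (hsame : ∀ n : ℕ, {C ∈ γ.classes | C.ncard = n}.ncard = {C ∈ π.classes | C.ncard = n}.ncard) :
    ∃ ℓ : Setoid (Fin k ⊕ Fin k), IsUniform k ℓ ∧ botPart ℓ = π ∧ topPart ℓ = γ := by
  have hfib : ∀ n : ℕ, Nonempty
      ({x : {C // C ∈ γ.classes} // x.1.ncard = n} ≃ {y : {C // C ∈ π.classes} // y.1.ncard = n}) := by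
    intro n
    rw [← Finite.card_eq]
    have c1 : Nat.card {x : {C // C ∈ γ.classes} // x.1.ncard = n}
        = {C ∈ γ.classes | C.ncard = n}.ncard := by
      rw [← Nat.card_coe_set_eq]
      exact Nat.card_congr
        ⟨fun x => ⟨x.1.1, x.1.2, x.2⟩, fun y => ⟨⟨y.1, y.2.1⟩, y.2.2⟩,
          fun _ => rfl, fun _ => rfl⟩
    have c2 : Nat.card {y : {C // C ∈ π.classes} // y.1.ncard = n}
        = {C ∈ π.classes | C.ncard = n}.ncard := by
      rw [← Nat.card_coe_set_eq]
      exact Nat.card_congr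
        ⟨fun x => ⟨x.1.1, x.1.2, x.2⟩, fun y => ⟨⟨y.1, y.2.1⟩, y.2.2⟩,
          fun _ => rfl, fun _ => rfl⟩
    rw [c1, c2]
    exact hsame n
  let Φ : {C // C ∈ γ.classes} ≃ {C // C ∈ π.classes} :=
    Equiv.ofFiberEquiv (f := fun x => x.1.ncard) (g := fun y => y.1.ncard)
      (fun n => (hfib n).some)
  have hΦ : ∀ x, (Φ x).1.ncard = x.1.ncard := fun x =>
    Equiv.ofFiberEquiv_map (fun n => (hfib n).some) x
  exact ⟨lsSetoid γ π Φ, lsSetoid_uniform γ π Φ hΦ, lsSetoid_bot γ π Φ, lsSetoid_top γ π Φ⟩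

end Backward
end UBP

/-- The maximal subgroup `G_{e_π} = {g : top(g)=bot(g)=π}` acts
freely on the right on the `L`-class `L_π = {d : bot(d)=π}`, two elements lie in
the same orbit iff they have the same top, and the orbits are in bijection with the
set partitions of `[k]` of the same type as `π`. -/
theorem ubp_L_class_orbits (k : ℕ) (π : Setoid (Fin k)) :
    (∀ ℓ : Setoid (Fin k ⊕ Fin k), IsUniform k ℓ → botPart ℓ = π →
      ∀ g : Setoid (Fin k ⊕ Fin k), IsUniform k g → topPart g = π → botPart g = π →
        IsUniform k (ubpMul ℓ g) ∧ botPart (ubpMul ℓ g) = π) ∧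
    (∀ ℓ : Setoid (Fin k ⊕ Fin k), IsUniform k ℓ → botPart ℓ = π →
      ∀ g h : Setoid (Fin k ⊕ Fin k),
        IsUniform k g → topPart g = π → botPart g = π →
        IsUniform k h → topPart h = π → botPart h = π →
        ubpMul ℓ g = ubpMul ℓ h → g = h) ∧
    (∀ d₁ d₂ : Setoid (Fin k ⊕ Fin k),
      IsUniform k d₁ → botPart d₁ = π → IsUniform k d₂ → botPart d₂ = π →
      ((∃ g, (IsUniform k g ∧ topPart g = π ∧ botPart g = π) ∧ d₂ = ubpMul d₁ g) ↔
        topPart d₁ = topPart d₂)) ∧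
    Nonempty (Quotient (Setoid.ker
        (fun ℓ : {d : Setoid (Fin k ⊕ Fin k) // IsUniform k d ∧ botPart d = π} =>
          topPart ℓ.1)) ≃
      {γ : Setoid (Fin k) // ∀ n : ℕ,
        {C ∈ γ.classes | C.ncard = n}.ncard = {C ∈ π.classes | C.ncard = n}.ncard}) := by
  constructor
  · intro ℓ hℓ hℓb g hg hgt hgb
    have hpe : botPart ℓ = topPart g := hℓb.trans hgt.symm
    exact ⟨UBP.mul_uniform ℓ g hℓ hg hpe, (UBP.mul_bot ℓ g hℓ hg hpe).trans hgb⟩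
  refine ⟨UBP.part2 π, UBP.part3 π, ?_⟩
  refine ⟨(Setoid.quotientKerEquivRange _).trans (Equiv.subtypeEquivRight ?_)⟩
  intro γ
  constructor
  · rintro ⟨⟨ℓ, hℓu, hℓb⟩, rfl⟩
    intro n
    have := UBP.part4_forward ℓ hℓu n
    rwa [hℓb] at this
  · intro hs
    obtain ⟨ℓ, hu, hb, ht⟩ := UBP.part4_backward hs
    exact ⟨⟨ℓ, hu, hb⟩, ht⟩
end

section
/- For m ∈ U_k and ℓ ∈ L_π (the L-class of e_π), the product mℓ belongs to L_π if and only if bot(m) is a refinement of top(ℓ) (i.e., every block of bot(m) is contained in a block of top(ℓ)). -/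
open Sum

/-- Auxiliary: the set of bottom-row points connected to a given vertex of the
three-row diagram, assuming `botPart m ≤ topPart ℓ`. -/
def connSet {k : ℕ} (m ℓ : Setoid (Fin k ⊕ Fin k)) :
    Fin k ⊕ (Fin k ⊕ Fin k) → Set (Fin k)
  | .inl a => {j | ∃ b, m.r (.inl a) (.inr b) ∧ ℓ.r (.inl b) (.inr j)}
  | .inr (.inl b) => {j | ℓ.r (.inl b) (.inr j)}
  | .inr (.inr j0) => {j | ℓ.r (.inr j0) (.inr j)}

lemma lift_m_le_ker {k : ℕ} (m ℓ : Setoid (Fin k ⊕ Fin k))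
    (h : botPart m ≤ topPart ℓ) :
    liftSetoid k (row12 k) m ≤ Setoid.ker (connSet m ℓ) := by
  apply Setoid.eqvGen_le
  rintro x y ⟨a, b, hab, rfl, rfl⟩
  rw [Setoid.ker_def]
  have key : ∀ c c' : Fin k, m.r (.inr c) (.inr c') → ℓ.r (.inl c) (.inl c') :=
    fun c c' hc => Setoid.le_def.mp h hc
  rcases a with a1 | b1 <;> rcases b with a2 | b2 <;>
    simp only [row12, Sum.elim_inl, Sum.elim_inr, connSet] <;> ext j <;>
    simp only [Set.mem_setOf_eq]
  · exact ⟨fun ⟨c, h1, h2⟩ => ⟨c, m.trans (m.symm hab) h1, h2⟩,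
      fun ⟨c, h1, h2⟩ => ⟨c, m.trans hab h1, h2⟩⟩
  · constructor
    · rintro ⟨c, h1, h2⟩
      exact ℓ.trans (ℓ.symm (key c b2 (m.trans (m.symm h1) hab))) h2
    · exact fun hj => ⟨b2, hab, hj⟩
  · constructor
    · exact fun hj => ⟨b1, m.symm hab, hj⟩
    · rintro ⟨c, h1, h2⟩
      exact ℓ.trans (key b1 c (m.trans hab h1)) h2
  · exact ⟨fun hj => ℓ.trans (ℓ.symm (key b1 b2 hab)) hj,
      fun hj => ℓ.trans (key b1 b2 hab) hj⟩

lemma lift_l_le_ker {k : ℕ} (m ℓ : Setoid (Fin k ⊕ Fin k)) :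
    liftSetoid k (row23 k) ℓ ≤ Setoid.ker (connSet m ℓ) := by
  apply Setoid.eqvGen_le
  rintro x y ⟨a, b, hab, rfl, rfl⟩
  rw [Setoid.ker_def]
  rcases a with a1 | b1 <;> rcases b with a2 | b2 <;>
    simp only [row23, Sum.elim_inl, Sum.elim_inr, connSet] <;> ext j <;>
    simp only [Set.mem_setOf_eq]
  · exact ⟨fun hj => ℓ.trans (ℓ.symm hab) hj, fun hj => ℓ.trans hab hj⟩
  · exact ⟨fun hj => ℓ.trans (ℓ.symm hab) hj, fun hj => ℓ.trans hab hj⟩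
  · exact ⟨fun hj => ℓ.trans (ℓ.symm hab) hj, fun hj => ℓ.trans hab hj⟩
  · exact ⟨fun hj => ℓ.trans (ℓ.symm hab) hj, fun hj => ℓ.trans hab hj⟩

lemma exists_bot_of_uniform {k : ℕ} (ℓ : Setoid (Fin k ⊕ Fin k))
    (hℓ : IsUniform k ℓ) (b : Fin k) : ∃ j, ℓ.r (.inr j) (.inl b) := by
  have h := hℓ (.inl b)
  have h1 : 0 < {a : Fin k | ℓ.r (.inl a) (.inl b)}.ncard :=
    (Set.ncard_pos (Set.toFinite _)).mpr ⟨b, ℓ.refl _⟩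
  rw [h] at h1
  exact (Set.ncard_pos (Set.toFinite _)).mp h1

/-- For `m ∈ U_k` and `ℓ` in the `L`-class of `e_π`, the product
`mℓ` stays in this `L`-class iff `bot(m)` refines `top(ℓ)`. -/
theorem ubp_mul_mem_L_class_iff (k : ℕ) (π : Setoid (Fin k))
    (m ℓ : Setoid (Fin k ⊕ Fin k)) (hm : IsUniform k m) (hℓ : IsUniform k ℓ)
    (hbot : botPart ℓ = π) :
    botPart (ubpMul m ℓ) = π ↔ botPart m ≤ topPart ℓ := by
  subst hbot
  constructor
  · intro h
    rw [Setoid.le_def]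
    intro b b' hbb'
    have hbb : m.r (.inr b) (.inr b') := hbb'
    obtain ⟨j, hj⟩ := exists_bot_of_uniform ℓ hℓ b
    obtain ⟨j', hj'⟩ := exists_bot_of_uniform ℓ hℓ b'
    -- connect in the three-row diagram
    set J := liftSetoid k (row12 k) m ⊔ liftSetoid k (row23 k) ℓ with hJ
    have t1 : J.r (.inr (.inr j)) (.inr (.inl b)) :=
      Setoid.le_def.mp le_sup_right
        (Relation.EqvGen.rel _ _ ⟨.inr j, .inl b, hj, rfl, rfl⟩)
    have t2 : J.r (.inr (.inl b)) (.inr (.inl b')) :=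
      Setoid.le_def.mp le_sup_left
        (Relation.EqvGen.rel _ _ ⟨.inr b, .inr b', hbb, rfl, rfl⟩)
    have t3 : J.r (.inr (.inl b')) (.inr (.inr j')) :=
      Setoid.le_def.mp le_sup_right
        (Relation.EqvGen.rel _ _ ⟨.inl b', .inr j', ℓ.symm hj', rfl, rfl⟩)
    have hJj : J.r (.inr (.inr j)) (.inr (.inr j')) := J.trans (J.trans t1 t2) t3
    have hprod : (botPart (ubpMul m ℓ)).r j j' := hJj
    rw [h] at hprod
    have hℓjj : ℓ.r (.inr j) (.inr j') := hprod
    -- conclude topPart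
    show ℓ.r (.inl b) (.inl b')
    exact ℓ.trans (ℓ.symm hj) (ℓ.trans (ℓ.trans hℓjj hj') (ℓ.refl _))
  · intro h
    apply le_antisymm
    · rw [Setoid.le_def]
      intro j j' hjj'
      have hker := Setoid.le_def.mp
        (sup_le (lift_m_le_ker m ℓ h) (lift_l_le_ker m ℓ)) hjj'
      rw [Setoid.ker_def] at hker
      have hkj : connSet m ℓ (.inr (.inr j)) = connSet m ℓ (.inr (.inr j')) := hker
      have hjmem : j ∈ connSet m ℓ (.inr (.inr j)) := ℓ.refl _
      rw [hkj] at hjmem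
      exact (Setoid.symm hjmem : ℓ.r (.inr j) (.inr j'))
    · rw [Setoid.le_def]
      intro j j' hjj'
      have : ℓ.r (.inr j) (.inr j') := hjj'
      exact Setoid.le_def.mp le_sup_right
        (Relation.EqvGen.rel _ _ ⟨.inr j, .inr j', this, rfl, rfl⟩)
end

section
/- Two elements c, d ∈ U_k are conjugate (in the monoid sense: there exists x with x x̃ = d^ω, x̃ x = c^ω, and x c^{ω+1} x̃ = d^{ω+1}) if and only if cycletype(c) = cycletype(d), where cycletype(x) is the k-tuple of partitions recording the cycle structure of x^{ω+1} acting as a permutation on the blocks of each size of the partition underlying the idempotent x^ω. -/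
open Sum

/-- The type of uniform block permutations of `[k]`. -/
def UBPel (k : ℕ) : Type := {d : Setoid (Fin k ⊕ Fin k) // IsUniform k d}

/-- Two block-size-preserving block permutations (`c'` of the blocks of `πc`, `d'` of
the blocks of `πd`) have the same cycle type, i.e. there is a size-preserving
bijection between blocks intertwining the two block permutations. -/
def SameCycleType (k : ℕ) (πc : Setoid (Fin k)) (c' : Setoid (Fin k ⊕ Fin k))
    (πd : Setoid (Fin k)) (d' : Setoid (Fin k ⊕ Fin k)) : Prop :=
  ∃ Φ : ↥πc.classes ≃ ↥πd.classes,
    (∀ C : ↥πc.classes, (C : Set (Fin k)).ncard = ((Φ C : Set (Fin k))).ncard) ∧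
    ∀ C D : ↥πc.classes, blockMap c' (C : Set (Fin k)) = (D : Set (Fin k)) →
      blockMap d' ((Φ C : Set (Fin k))) = ((Φ D : Set (Fin k)))

/-!
A uniform diagram `a` with top partition `π₁` and bottom partition `π₂` is the same thing as a
size-preserving bijection `blockMap a` from the blocks of `π₁` to those of `π₂`, and when the
bottom partition of `a` is the top partition of `b`, the product `ubpMul a b` composes these
bijections. Idempotents are exactly the diagrams `e_π`, whose block bijection is the identity, and
`c^{ω+1} = c^ω c` is invertible in `c^ω U_k c^ω`, so its top and bottom partitions are both `π_c`.
Hence a conjugating pair `x, x̃` is a block bijection `x̃ : π_c → π_d` with inverse `x`, and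
`x c^{ω+1} x̃ = d^{ω+1}` says exactly that it intertwines the two block permutations. Conversely a
size-preserving intertwining bijection `Φ` is realised by the diagram with blocks `C ∪ (Φ C)‾`.
-/

namespace Setoid

variable {α : Type*} {π : Setoid α} {a b : α}

noncomputable def classOf (π : Setoid α) (a : α) : π.classes :=
  π.quotientEquivClasses ⟦a⟧

@[simp]
theorem coe_classOf : (π.classOf a : Set α) = {x | π x a} :=
  quotientEquivClasses_mk_eq π a

theorem classOf_eq_classOf_iff : π.classOf a = π.classOf b ↔ π a b :=
  π.quotientEquivClasses.apply_eq_iff_eq.trans Quotient.eq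

theorem mem_classOf_self : a ∈ (π.classOf a : Set α) := by
  rw [coe_classOf]
  exact π.refl a

theorem classOf_eq_iff_mem {C : π.classes} : π.classOf a = C ↔ a ∈ (C : Set α) :=
  ⟨fun h => h ▸ mem_classOf_self,
    fun h => Subtype.ext (eq_of_mem_classes (π.classOf a).2 mem_classOf_self C.2 h)⟩

end Setoid

open Sum Setoid

variable {k : ℕ} {d d' s t : Setoid (Fin k ⊕ Fin k)}

theorem IsUniform.exists_inr (hd : IsUniform k d) (i : Fin k) : ∃ j, d (inl i) (inr j) := by
  obtain ⟨j, hj⟩ : {b : Fin k | d (inr b) (inl i)}.Nonempty := by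
    rw [← Set.ncard_pos, ← hd]
    exact (Set.ncard_pos (Set.toFinite _)).2 ⟨i, d.refl _⟩
  exact ⟨j, d.symm hj⟩

theorem IsUniform.exists_inl (hd : IsUniform k d) (j : Fin k) : ∃ i, d (inl i) (inr j) := by
  show {a : Fin k | d (inl a) (inr j)}.Nonempty
  rw [← Set.ncard_pos, hd]
  exact (Set.ncard_pos (Set.toFinite _)).2 ⟨j, d.refl _⟩

theorem blockMap_setOf_topPart (d : Setoid (Fin k ⊕ Fin k)) (i : Fin k) :
    blockMap d {a | topPart d a i} = {b | d (inl i) (inr b)} :=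
  Set.ext fun _ => ⟨fun ⟨_, ha, hab⟩ => d.trans (d.symm ha) hab, fun h => ⟨i, d.refl _, h⟩⟩

theorem IsUniform.ncard_blockMap (hd : IsUniform k d) {C : Set (Fin k)}
    (hC : C ∈ (topPart d).classes) : (blockMap d C).ncard = C.ncard := by
  obtain ⟨i, rfl⟩ := hC
  rw [blockMap_setOf_topPart]
  exact (congrArg Set.ncard (Set.ext fun _ => ⟨d.symm, d.symm⟩)).trans (hd (inl i)).symm

theorem IsUniform.blockMap_mem_classes (hd : IsUniform k d) {C : Set (Fin k)}
    (hC : C ∈ (topPart d).classes) : blockMap d C ∈ (botPart d).classes := by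
  obtain ⟨i, rfl⟩ := hC
  obtain ⟨j, hj⟩ := hd.exists_inr i
  rw [blockMap_setOf_topPart]
  exact ⟨j, Set.ext fun _ => ⟨fun h => d.trans (d.symm h) hj, fun h => d.trans hj (d.symm h)⟩⟩

theorem IsUniform.of_ncard_blockMap (hs : ∀ j, ∃ i, s (inl i) (inr j))
    (h : ∀ i, (blockMap s {a | topPart s a i}).ncard = {a | topPart s a i}.ncard) :
    IsUniform k s := by
  have top : ∀ i, {a | s (inl a) (inl i)}.ncard = {b | s (inr b) (inl i)}.ncard := fun i => by
    have hi := h i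
    rw [blockMap_setOf_topPart] at hi
    exact hi.symm.trans (congrArg Set.ncard (Set.ext fun _ => ⟨s.symm, s.symm⟩))
  rintro (i | j)
  · exact top i
  · obtain ⟨i, hi⟩ := hs j
    have hx : ∀ z, s z (inr j) ↔ s z (inl i) :=
      fun z => ⟨fun h => s.trans h (s.symm hi), fun h => s.trans h hi⟩
    simp only [hx]
    exact top i

theorem eq_of_blockMap_eq (htop : topPart s = topPart t) (hbot : botPart s = botPart t)
    (hmap : ∀ C ∈ (topPart s).classes, blockMap s C = blockMap t C) : s = t := by
  have cross : ∀ i j, s (inl i) (inr j) ↔ t (inl i) (inr j) := fun i j => by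
    have hi := hmap _ ((topPart s).mem_classes i)
    rw [blockMap_setOf_topPart, htop, blockMap_setOf_topPart] at hi
    exact Set.ext_iff.1 hi j
  refine Setoid.ext ?_
  rintro (i | j) (i' | j')
  · exact Setoid.ext_iff.1 htop i i'
  · exact cross i j'
  · exact ⟨fun h => t.symm ((cross i' j).1 (s.symm h)),
      fun h => s.symm ((cross i' j).2 (t.symm h))⟩
  · exact Setoid.ext_iff.1 hbot j j'

section ubpMul

variable {i i' j j' m : Fin k}

theorem ubpMul_inl_inl_of_rel (h : d (inl i) (inl i')) : ubpMul d d' (inl i) (inl i') :=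
  Setoid.le_def.1 le_sup_left (Relation.EqvGen.rel _ _ ⟨inl i, inl i', h, rfl, rfl⟩)

theorem ubpMul_inr_inr_of_rel (h : d' (inr j) (inr j')) : ubpMul d d' (inr j) (inr j') :=
  Setoid.le_def.1 le_sup_right (Relation.EqvGen.rel _ _ ⟨inr j, inr j', h, rfl, rfl⟩)

theorem ubpMul_inl_inr_of_rel (h : d (inl i) (inr m)) (h' : d' (inl m) (inr j)) :
    ubpMul d d' (inl i) (inr j) :=
  Setoid.trans' _ (y := row12 k (inr m))
    (Setoid.le_def.1 le_sup_left (Relation.EqvGen.rel _ _ ⟨inl i, inr m, h, rfl, rfl⟩))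
    (Setoid.le_def.1 le_sup_right (Relation.EqvGen.rel _ _ ⟨inl m, inr j, h', rfl, rfl⟩))

theorem topPart_le_topPart_ubpMul : topPart d ≤ topPart (ubpMul d d') :=
  Setoid.le_def.2 ubpMul_inl_inl_of_rel

theorem botPart_le_botPart_ubpMul : botPart d' ≤ botPart (ubpMul d d') :=
  Setoid.le_def.2 ubpMul_inr_inr_of_rel

/-- When `botPart d = topPart d'`, the block of the middle row met by the component of a vertex
of the stacked diagram; being constant on components, it bounds `ubpMul d d'` from above. -/
def midBlock (d d' : Setoid (Fin k ⊕ Fin k)) : Fin k ⊕ (Fin k ⊕ Fin k) → Set (Fin k) :=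
  Sum.elim (fun i => {m | d (inl i) (inr m)}) (fun y => {m | d' (inl m) y})

theorem midBlock_row12 (h : botPart d = topPart d') (a : Fin k ⊕ Fin k) :
    midBlock d d' (row12 k a) = {m | d a (inr m)} := by
  rcases a with i | m₀
  · rfl
  · ext m
    exact (Setoid.ext_iff.1 h m m₀).symm.trans ⟨d.symm, d.symm⟩

theorem midBlock_row23 (a : Fin k ⊕ Fin k) : midBlock d d' (row23 k a) = {m | d' (inl m) a} := by
  rcases a with _ | _ <;> rfl

theorem midBlock_eq_of_ubpMul (h : botPart d = topPart d') {x y : Fin k ⊕ Fin k}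
    (hxy : ubpMul d d' x y) : midBlock d d' (row13 k x) = midBlock d d' (row13 k y) := by
  have hle : liftSetoid k (row12 k) d ⊔ liftSetoid k (row23 k) d' ≤
      Setoid.ker (midBlock d d') := by
    refine sup_le (Setoid.eqvGen_le ?_) (Setoid.eqvGen_le ?_) <;>
      rintro _ _ ⟨a, b, hab, rfl, rfl⟩ <;> ext m
    · rw [midBlock_row12 h, midBlock_row12 h]
      exact ⟨d.trans (d.symm hab), d.trans hab⟩
    · rw [midBlock_row23, midBlock_row23]
      exact ⟨fun hm => d'.trans hm hab, fun hm => d'.trans hm (d'.symm hab)⟩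
  exact Setoid.le_def.1 hle hxy

section composable

variable (h : botPart d = topPart d')
include h

theorem ubpMul_inl_inl_iff (hd : IsUniform k d) :
    ubpMul d d' (inl i) (inl i') ↔ d (inl i) (inl i') := by
  refine ⟨fun hp => ?_, ubpMul_inl_inl_of_rel⟩
  obtain ⟨m, hm⟩ := hd.exists_inr i
  have hm' : d (inl i') (inr m) := (Set.ext_iff.1 (midBlock_eq_of_ubpMul h hp) m).1 hm
  exact d.trans hm (d.symm hm')

theorem ubpMul_inr_inr_iff (hd' : IsUniform k d') :
    ubpMul d d' (inr j) (inr j') ↔ d' (inr j) (inr j') := by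
  refine ⟨fun hp => ?_, ubpMul_inr_inr_of_rel⟩
  obtain ⟨m, hm⟩ := hd'.exists_inl j
  have hm' : d' (inl m) (inr j') := (Set.ext_iff.1 (midBlock_eq_of_ubpMul h hp) m).1 hm
  exact d'.trans (d'.symm hm) hm'

theorem ubpMul_inl_inr_iff (hd : IsUniform k d) :
    ubpMul d d' (inl i) (inr j) ↔ ∃ m, d (inl i) (inr m) ∧ d' (inl m) (inr j) := by
  refine ⟨fun hp => ?_, fun ⟨m, hm, hm'⟩ => ubpMul_inl_inr_of_rel hm hm'⟩
  obtain ⟨m, hm⟩ := hd.exists_inr i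
  exact ⟨m, hm, (Set.ext_iff.1 (midBlock_eq_of_ubpMul h hp) m).1 hm⟩

theorem topPart_ubpMul (hd : IsUniform k d) : topPart (ubpMul d d') = topPart d :=
  Setoid.ext fun _ _ => ubpMul_inl_inl_iff h hd

theorem botPart_ubpMul (hd' : IsUniform k d') : botPart (ubpMul d d') = botPart d' :=
  Setoid.ext fun _ _ => ubpMul_inr_inr_iff h hd'

theorem blockMap_ubpMul (hd : IsUniform k d) (S : Set (Fin k)) :
    blockMap (ubpMul d d') S = blockMap d' (blockMap d S) := by
  ext j
  simp only [blockMap, Set.mem_ofPred_eq, ubpMul_inl_inr_iff h hd]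
  exact ⟨fun ⟨i, hi, m, hm, hmj⟩ => ⟨m, ⟨i, hi, hm⟩, hmj⟩,
    fun ⟨m, ⟨i, hi, hm⟩, hmj⟩ => ⟨i, hi, m, hm, hmj⟩⟩

theorem IsUniform.ubpMul (hd : IsUniform k d) (hd' : IsUniform k d') :
    IsUniform k (ubpMul d d') := by
  refine IsUniform.of_ncard_blockMap (fun j => ?_) (fun i => ?_)
  · obtain ⟨m, hm⟩ := hd'.exists_inl j
    obtain ⟨i, hi⟩ := hd.exists_inl m
    exact ⟨i, ubpMul_inl_inr_of_rel hi hm⟩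
  · have hC : {a | topPart d a i} ∈ (topPart d).classes := (topPart d).mem_classes i
    rw [topPart_ubpMul h hd, blockMap_ubpMul h hd,
      hd'.ncard_blockMap (h ▸ hd.blockMap_mem_classes hC), hd.ncard_blockMap hC]

end composable

end ubpMul

/-- In semigroup terms: `a` lies in the `ℛ`-class of `ePart π₁` and the `ℒ`-class of
`ePart π₂`. -/
structure IsBlockBijection (π₁ π₂ : Setoid (Fin k)) (a : Setoid (Fin k ⊕ Fin k)) : Prop where
  uniform : IsUniform k a
  topPart_eq : topPart a = π₁
  botPart_eq : botPart a = π₂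

namespace IsBlockBijection

variable {π₁ π₂ π₃ : Setoid (Fin k)} {a b : Setoid (Fin k ⊕ Fin k)}

theorem trans (ha : IsBlockBijection π₁ π₂ a) (hb : IsBlockBijection π₂ π₃ b) :
    IsBlockBijection π₁ π₃ (ubpMul a b) where
  uniform := ha.uniform.ubpMul (ha.botPart_eq.trans hb.topPart_eq.symm) hb.uniform
  topPart_eq := (topPart_ubpMul (ha.botPart_eq.trans hb.topPart_eq.symm) ha.uniform).trans
    ha.topPart_eq
  botPart_eq := (botPart_ubpMul (ha.botPart_eq.trans hb.topPart_eq.symm) hb.uniform).trans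
    hb.botPart_eq

theorem blockMap_ubpMul (ha : IsBlockBijection π₁ π₂ a) (hb : IsBlockBijection π₂ π₃ b)
    (S : Set (Fin k)) : blockMap (ubpMul a b) S = blockMap b (blockMap a S) :=
  _root_.blockMap_ubpMul (ha.botPart_eq.trans hb.topPart_eq.symm) ha.uniform S

theorem mapsTo_blockMap (ha : IsBlockBijection π₁ π₂ a) :
    Set.MapsTo (blockMap a) π₁.classes π₂.classes := fun C hC => by
  rw [← ha.topPart_eq] at hC
  rw [← ha.botPart_eq]
  exact ha.uniform.blockMap_mem_classes hC

theorem ncard_blockMap (ha : IsBlockBijection π₁ π₂ a) {C : Set (Fin k)}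
    (hC : C ∈ π₁.classes) : (blockMap a C).ncard = C.ncard :=
  ha.uniform.ncard_blockMap (ha.topPart_eq ▸ hC)

theorem ext (ha : IsBlockBijection π₁ π₂ a) (hb : IsBlockBijection π₁ π₂ b)
    (h : ∀ C : π₁.classes, blockMap a C = blockMap b C) : a = b :=
  eq_of_blockMap_eq (ha.topPart_eq.trans hb.topPart_eq.symm)
    (ha.botPart_eq.trans hb.botPart_eq.symm) fun C hC => h ⟨C, ha.topPart_eq ▸ hC⟩

end IsBlockBijection

section ePart

variable {π π₁ π₂ : Setoid (Fin k)} {a : Setoid (Fin k ⊕ Fin k)}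

theorem isBlockBijection_ePart (π : Setoid (Fin k)) : IsBlockBijection π π (ePart π) :=
  ⟨fun _ => rfl, rfl, rfl⟩

theorem blockMap_ePart {C : Set (Fin k)} (hC : C ∈ π.classes) : blockMap (ePart π) C = C := by
  obtain ⟨i, rfl⟩ := hC
  exact (blockMap_setOf_topPart (ePart π) i).trans (Set.ext fun _ => ⟨π.symm, π.symm⟩)

theorem IsBlockBijection.ePart_ubpMul (ha : IsBlockBijection π₁ π₂ a) :
    ubpMul (ePart π₁) a = a :=
  ((isBlockBijection_ePart π₁).trans ha).ext ha fun C => by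
    rw [(isBlockBijection_ePart π₁).blockMap_ubpMul ha, blockMap_ePart C.2]

theorem eq_ePart_of_ubpMul_self (he : IsUniform k s) (h : ubpMul s s = s) :
    s = ePart (topPart s) := by
  have diag : ∀ m, s (inl m) (inr m) := fun m => by
    obtain ⟨i, hi⟩ := he.exists_inl m
    obtain ⟨j, hj⟩ := he.exists_inr m
    have hij : s (inl i) (inr j) := h ▸ ubpMul_inl_inr_of_rel hi hj
    exact s.trans hj (s.trans (s.symm hij) hi)
  have hx : ∀ x, s x (inl (Sum.elim id id x)) := by
    rintro (m | m)
    exacts [s.refl _, s.symm (diag m)]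
  exact Setoid.ext fun x y => ⟨fun hxy => s.trans (s.symm (hx x)) (s.trans hxy (hx y)),
    fun hxy => s.trans (hx x) (s.trans hxy (s.symm (hx y)))⟩

end ePart

section Green

variable {a b e : Setoid (Fin k ⊕ Fin k)}

theorem topPart_eq_of_ubpMul_eq (hab : ubpMul a b = e) (hea : ubpMul e a = a) :
    topPart a = topPart e :=
  le_antisymm (hab ▸ topPart_le_topPart_ubpMul) (hea ▸ topPart_le_topPart_ubpMul)

theorem botPart_eq_of_ubpMul_eq (hba : ubpMul b a = e) (hae : ubpMul a e = a) :
    botPart a = botPart e :=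
  le_antisymm (hba ▸ botPart_le_botPart_ubpMul) (hae ▸ botPart_le_botPart_ubpMul)

end Green

namespace IsBlockBijection

variable {π₁ π₂ : Setoid (Fin k)} {a b : Setoid (Fin k ⊕ Fin k)}

theorem leftInvOn_blockMap (ha : IsBlockBijection π₁ π₂ a) (hb : IsBlockBijection π₂ π₁ b)
    (hab : _root_.ubpMul a b = ePart π₁) :
    Set.LeftInvOn (blockMap b) (blockMap a) π₁.classes := fun C hC => by
  rw [← ha.blockMap_ubpMul hb, hab, blockMap_ePart hC]

theorem bijOn_blockMap (ha : IsBlockBijection π₁ π₂ a) (hb : IsBlockBijection π₂ π₁ b)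
    (hab : _root_.ubpMul a b = ePart π₁) (hba : _root_.ubpMul b a = ePart π₂) :
    Set.BijOn (blockMap a) π₁.classes π₂.classes :=
  Set.InvOn.bijOn ⟨ha.leftInvOn_blockMap hb hab, hb.leftInvOn_blockMap ha hba⟩
    ha.mapsTo_blockMap hb.mapsTo_blockMap

end IsBlockBijection

section ofClassesEquiv

variable {π₁ π₂ : Setoid (Fin k)} (Φ : π₁.classes ≃ π₂.classes)

/-- The diagram with blocks `C ∪ (Φ C)‾`. -/
noncomputable def ofClassesEquiv : Setoid (Fin k ⊕ Fin k) :=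
  Setoid.ker (Sum.elim (fun i => Φ (π₁.classOf i)) π₂.classOf)

theorem ofClassesEquiv_inl_inr {i j : Fin k} :
    ofClassesEquiv Φ (inl i) (inr j) ↔ j ∈ (Φ (π₁.classOf i) : Set (Fin k)) :=
  eq_comm.trans classOf_eq_iff_mem

theorem blockMap_ofClassesEquiv (C : π₁.classes) : blockMap (ofClassesEquiv Φ) C = Φ C := by
  ext j
  simp only [blockMap, Set.mem_ofPred_eq, ofClassesEquiv_inl_inr]
  constructor
  · rintro ⟨i, hi, hj⟩
    rwa [classOf_eq_iff_mem.2 hi] at hj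
  · intro hj
    obtain ⟨i, hi⟩ := nonempty_of_mem_partition (isPartition_classes π₁) C.2
    exact ⟨i, hi, by rwa [classOf_eq_iff_mem.2 hi]⟩

variable {Φ}

theorem isBlockBijection_ofClassesEquiv
    (hΦ : ∀ C : π₁.classes, (C : Set (Fin k)).ncard = (Φ C : Set (Fin k)).ncard) :
    IsBlockBijection π₁ π₂ (ofClassesEquiv Φ) where
  uniform x := by
    set D := Sum.elim (fun i => Φ (π₁.classOf i)) π₂.classOf x
    have htop : {a | ofClassesEquiv Φ (inl a) x} = Φ.symm D :=
      Set.ext fun _ => Φ.eq_symm_apply.symm.trans classOf_eq_iff_mem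
    have hbot : {b | ofClassesEquiv Φ (inr b) x} = D := Set.ext fun _ => classOf_eq_iff_mem
    rw [htop, hbot, hΦ, Φ.apply_symm_apply]
  topPart_eq := Setoid.ext fun _ _ => Φ.apply_eq_iff_eq.trans classOf_eq_classOf_iff
  botPart_eq := Setoid.ext fun _ _ => classOf_eq_classOf_iff

theorem ncard_symm_apply_of_ncard_apply
    (hΦ : ∀ C : π₁.classes, (C : Set (Fin k)).ncard = (Φ C : Set (Fin k)).ncard)
    (D : π₂.classes) : (D : Set (Fin k)).ncard = (Φ.symm D : Set (Fin k)).ncard := by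
  rw [hΦ, Φ.apply_symm_apply]

theorem ofClassesEquiv_ubpMul_symm
    (hΦ : ∀ C : π₁.classes, (C : Set (Fin k)).ncard = (Φ C : Set (Fin k)).ncard) :
    ubpMul (ofClassesEquiv Φ) (ofClassesEquiv Φ.symm) = ePart π₁ := by
  have hx := isBlockBijection_ofClassesEquiv hΦ
  have hy := isBlockBijection_ofClassesEquiv (ncard_symm_apply_of_ncard_apply hΦ)
  refine (hx.trans hy).ext (isBlockBijection_ePart π₁) fun C => ?_
  rw [hx.blockMap_ubpMul hy, blockMap_ofClassesEquiv, blockMap_ofClassesEquiv,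
    Φ.symm_apply_apply, blockMap_ePart C.2]

end ofClassesEquiv

section conjugacy

variable {πc πd : Setoid (Fin k)} {g h x x' : Setoid (Fin k ⊕ Fin k)}

theorem sameCycleType_of_conjugate (hx : IsBlockBijection πd πc x)
    (hx' : IsBlockBijection πc πd x') (hg : IsBlockBijection πc πc g)
    (hx'x : ubpMul x' x = ePart πc) (hxx' : ubpMul x x' = ePart πd) :
    SameCycleType k πc g πd (ubpMul (ubpMul x g) x') := by
  refine ⟨(hx'.bijOn_blockMap hx hx'x hxx').equiv _, fun C => (hx'.ncard_blockMap C.2).symm,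
    fun C D hCD => ?_⟩
  show blockMap _ (blockMap x' C) = blockMap x' D
  rw [(hx.trans hg).blockMap_ubpMul hx', hx.blockMap_ubpMul hg,
    hx'.leftInvOn_blockMap hx hx'x C.2, hCD]

theorem exists_conjugate_of_sameCycleType (hg : IsBlockBijection πc πc g)
    (hh : IsBlockBijection πd πd h) (hcyc : SameCycleType k πc g πd h) :
    ∃ x x', IsBlockBijection πd πc x ∧ IsBlockBijection πc πd x' ∧
      ubpMul x' x = ePart πc ∧ ubpMul x x' = ePart πd ∧ ubpMul (ubpMul x g) x' = h := by
  obtain ⟨Φ, hΦ, hcomm⟩ := hcyc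
  have hΦ' := ncard_symm_apply_of_ncard_apply hΦ
  have hx := isBlockBijection_ofClassesEquiv hΦ'
  have hx' := isBlockBijection_ofClassesEquiv hΦ
  refine ⟨_, _, hx, hx', ofClassesEquiv_ubpMul_symm hΦ, ?_,
    ((hx.trans hg).trans hx').ext hh fun D => ?_⟩
  · simpa using ofClassesEquiv_ubpMul_symm hΦ'
  have hgC := hg.mapsTo_blockMap (Φ.symm D).2
  have hcommD := hcomm (Φ.symm D) ⟨_, hgC⟩ rfl
  rw [Φ.apply_symm_apply] at hcommD
  rw [(hx.trans hg).blockMap_ubpMul hx', hx.blockMap_ubpMul hg, blockMap_ofClassesEquiv, hcommD]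
  exact blockMap_ofClassesEquiv Φ ⟨_, hgC⟩

end conjugacy

theorem exists_mul_eq_of_pow_eq {M : Type*} [Monoid M] {c e : M} {n : ℕ} (hn : 0 < n)
    (hcn : c ^ n = e) (he : IsIdempotentElem e) :
    ∃ u, e * c * u = e ∧ u * (e * c) = e ∧ e * (e * c) = e * c ∧ e * c * e = e * c := by
  have hce : c * e = e * c := (hcn ▸ Commute.self_pow c n).eq
  have hcu : c * c ^ (n - 1) = e := by rw [← pow_succ', Nat.sub_add_cancel hn, hcn]
  have huc : c ^ (n - 1) * c = e := by rw [← pow_succ, Nat.sub_add_cancel hn, hcn]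
  refine ⟨c ^ (n - 1) * e, ?_, ?_, ?_, ?_⟩
  · calc e * c * (c ^ (n - 1) * e) = e * (c * c ^ (n - 1)) * e := by simp only [mul_assoc]
      _ = e := by rw [hcu, he.eq, he.eq]
  · calc c ^ (n - 1) * e * (e * c) = c ^ (n - 1) * c * e := by
          rw [mul_assoc, ← mul_assoc e, he.eq, ← hce, ← mul_assoc]
      _ = e := by rw [huc, he.eq]
  · rw [← mul_assoc, he.eq]
  · rw [mul_assoc, hce, ← mul_assoc, he.eq]

section UBPel

variable [Monoid (UBPel k)] (hmul : ∀ a b : UBPel k, (a * b).1 = ubpMul a.1 b.1)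
include hmul

theorem ubpMul_eq_of_mul_eq {a b e : UBPel k} (h : a * b = e) : ubpMul a.1 b.1 = e.1 :=
  (hmul a b).symm.trans (congrArg Subtype.val h)

theorem val_mul_mul (a b c : UBPel k) : (a * b * c).1 = ubpMul (ubpMul a.1 b.1) c.1 := by
  rw [hmul, hmul]

theorem isBlockBijection_of_mul_eq {π₁ π₂ : Setoid (Fin k)} {a b e f : UBPel k}
    (he : e.1 = ePart π₁) (hf : f.1 = ePart π₂) (hab : a * b = e) (hba : b * a = f)
    (hea : e * a = a) (haf : a * f = a) : IsBlockBijection π₁ π₂ a.1 where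
  uniform := a.2
  topPart_eq := by
    rw [topPart_eq_of_ubpMul_eq (ubpMul_eq_of_mul_eq hmul hab) (ubpMul_eq_of_mul_eq hmul hea), he]
    rfl
  botPart_eq := by
    rw [botPart_eq_of_ubpMul_eq (ubpMul_eq_of_mul_eq hmul hba) (ubpMul_eq_of_mul_eq hmul haf), hf]
    rfl

theorem isBlockBijection_mul_of_pow_eq {c e : UBPel k} {n : ℕ} (hn : 0 < n) (hcn : c ^ n = e)
    (he : e * e = e) : IsBlockBijection (topPart e.1) (topPart e.1) (e * c).1 := by
  have hePart := eq_ePart_of_ubpMul_self e.2 (ubpMul_eq_of_mul_eq hmul he)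
  obtain ⟨u, hcu, huc, hec, hce⟩ := exists_mul_eq_of_pow_eq hn hcn he
  exact isBlockBijection_of_mul_eq hmul hePart hePart hcu huc hec hce

end UBPel

theorem ubp_conjugacy_iff_cycleType_general (k : ℕ) [M : Monoid (UBPel k)]
    (hmul : ∀ a b : UBPel k, (a * b).1 = ubpMul a.1 b.1)
    (c d ec ed : UBPel k)
    (hcn : ∃ n : ℕ, 0 < n ∧ c ^ n = ec) (hce : ec * ec = ec)
    (hdn : ∃ n : ℕ, 0 < n ∧ d ^ n = ed) (hde : ed * ed = ed) :
    (∃ x x' : UBPel k, x * x' * x = x ∧ x' * x * x' = x' ∧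
        x' * x = ec ∧ x * x' = ed ∧ x * (ec * c) * x' = ed * d) ↔
      SameCycleType k (topPart ec.1) ((ec * c).1) (topPart ed.1) ((ed * d).1) := by
  obtain ⟨n, hn, hcn⟩ := hcn
  obtain ⟨n', hn', hdn⟩ := hdn
  have hec := eq_ePart_of_ubpMul_self ec.2 (ubpMul_eq_of_mul_eq hmul hce)
  have hed := eq_ePart_of_ubpMul_self ed.2 (ubpMul_eq_of_mul_eq hmul hde)
  have hg := isBlockBijection_mul_of_pow_eq hmul hn hcn hce
  have hh := isBlockBijection_mul_of_pow_eq hmul hn' hdn hde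
  constructor
  · rintro ⟨x, x', hxx'x, hx'xx', hx'x, hxx', hconj⟩
    have hx := isBlockBijection_of_mul_eq hmul hed hec hxx' hx'x (by rw [← hxx', hxx'x])
      (by rw [← hx'x, ← mul_assoc, hxx'x])
    have hx' := isBlockBijection_of_mul_eq hmul hec hed hx'x hxx' (by rw [← hx'x, hx'xx'])
      (by rw [← hxx', ← mul_assoc, hx'xx'])
    rw [← hconj, val_mul_mul hmul]
    exact sameCycleType_of_conjugate hx hx' hg ((ubpMul_eq_of_mul_eq hmul hx'x).trans hec)
      ((ubpMul_eq_of_mul_eq hmul hxx').trans hed)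
  · intro hcyc
    obtain ⟨x, x', hx, hx', hx'x, hxx', hconj⟩ := exists_conjugate_of_sameCycleType hg hh hcyc
    refine ⟨⟨x, hx.uniform⟩, ⟨x', hx'.uniform⟩, Subtype.ext ?_, Subtype.ext ?_, Subtype.ext ?_,
      Subtype.ext ?_, Subtype.ext ?_⟩
    · exact (val_mul_mul hmul _ _ _).trans ((congrArg (ubpMul · x) hxx').trans hx.ePart_ubpMul)
    · exact (val_mul_mul hmul _ _ _).trans ((congrArg (ubpMul · x') hx'x).trans hx'.ePart_ubpMul)
    · exact (hmul _ _).trans (hx'x.trans hec.symm)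
    · exact (hmul _ _).trans (hxx'.trans hed.symm)
    · exact (val_mul_mul hmul _ _ _).trans hconj

/-- Two elements `c, d ∈ U_k` are conjugate in the monoid sense iff
they have the same cycle type.  Here `ec = c^ω` is the unique idempotent power of `c`
(similarly `ed = d^ω`), `c^{ω+1} = ec·c` lies in the maximal subgroup at `ec = e_{π_c}`
with `π_c = top(ec)`, and equality of cycle types is expressed by a size-preserving
bijection of blocks intertwining the two induced block permutations. -/
theorem ubp_conjugacy_iff_cycleType (k : ℕ) [M : Monoid (UBPel k)]
    (hmul : ∀ a b : UBPel k, (a * b).1 = ubpMul a.1 b.1)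
    (hone : (1 : UBPel k).1 = ubpOne k)
    (c d ec ed : UBPel k)
    (hcn : ∃ n : ℕ, 0 < n ∧ c ^ n = ec) (hce : ec * ec = ec)
    (hdn : ∃ n : ℕ, 0 < n ∧ d ^ n = ed) (hde : ed * ed = ed) :
    (∃ x x' : UBPel k, x * x' * x = x ∧ x' * x * x' = x' ∧
        x' * x = ec ∧ x * x' = ed ∧ x * (ec * c) * x' = ed * d) ↔
      SameCycleType k (topPart ec.1) ((ec * c).1) (topPart ed.1) ((ed * d).1) :=
  ubp_conjugacy_iff_cycleType_general k (M := M) hmul c d ec ed hcn hce hdn hde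
end
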